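/- arXiv:1011.1633 — 11 statements merged into one kernel-verified Lean document; each statement's English description precedes it below -/
import Mathlib

section
/- Let H be a subgroup of a group E, p : E → H an H-linear retraction, S = p⁻¹(1), and ▷, ◁, f, ∗ the maps defined from p. Then: (i) the normalization conditions s ▷ 1 = 1, 1 ▷ h = h, 1 ◁ h = 1, s ◁ 1 = s, f(s, 1) = f(1, s) = 1, s ∗ 1 = 1 ∗ s = s hold for all s ∈ S, h ∈ H (where 1 ∈ S is the unit of E); (ii) the twisted associativity condition (s₁ ∗ s₂) ∗ s₃ = (s₁ ◁ f(s₂, s₃)) ∗ (s₂ ∗ s₃) holds for all s₁, s₂, s₃ ∈ S; (iii) for every s ∈ S there exists a unique s' ∈ S such that s' ∗ s = 1. -/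
/-!
Write `π x = p(x)⁻¹ x`. By `H`-linearity `p (π x) = 1` and `π (h x) = π x`, so `π` is the
projection of `E` onto `S` along the cosets `H x`, and `s ∗ t = π (s t)`, `s ◁ h = π (s h)`.
The normalization conditions are then immediate, and both sides of the twisted associativity
condition reduce to `π (s₁ s₂ s₃)`, because `π` ignores the left factors from `H`
that the operations insert. For (iii), `π (s' s) = 1` says `s' s ∈ H`, i.e. `s' ∈ H s⁻¹`, and
`π s⁻¹` is the only point of `S` in that coset.
-/

namespace LinearRetraction

variable {E : Type*} [Group E] {H : Subgroup E}

def proj (p : E → H) (x : E) : E := (p x : E)⁻¹ * x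

theorem proj_of_apply_eq_one {p : E → H} {x : E} (hx : p x = 1) : proj p x = x := by
  simp [proj, hx]

variable {p : E → H} (hp : ∀ (h : H) (x : E), p (↑h * x) = h * p x)
include hp

theorem apply_coe (hp1 : p 1 = 1) (h : H) : p h = h := by
  simpa [hp1] using hp h 1

theorem apply_proj (x : E) : p (proj p x) = 1 := by
  simpa [proj] using hp (p x)⁻¹ x

theorem proj_coe_mul (h : H) (x : E) : proj p (h * x) = proj p x := by
  simp only [proj, hp, Subgroup.coe_mul, mul_inv_rev, mul_assoc, inv_mul_cancel_left]

theorem proj_proj_mul (x y : E) : proj p (proj p x * y) = proj p (x * y) := by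
  rw [show proj p x * y = ↑(p x)⁻¹ * (x * y) by simp [proj, mul_assoc], proj_coe_mul hp]

theorem proj_eq_one_iff (hp1 : p 1 = 1) {x : E} : proj p x = 1 ↔ x ∈ H := by
  refine ⟨fun hx => ?_, fun hx => ?_⟩
  · rw [proj, inv_mul_eq_one] at hx
    exact hx ▸ (p x).2
  · rw [proj, inv_mul_eq_one]
    exact congrArg Subtype.val (apply_coe hp hp1 ⟨x, hx⟩)

theorem proj_twisted_assoc (x y z : E) :
    proj p (proj p (x * y) * z) = proj p (proj p (x * p (y * z)) * proj p (y * z)) := by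
  have hyz : proj p (y * z) = ↑(p (y * z))⁻¹ * (y * z) := rfl
  rw [hyz, proj_proj_mul hp, proj_proj_mul hp]
  simp only [Subgroup.coe_inv, mul_assoc, mul_inv_cancel_left]

theorem eq_proj_inv_of_proj_mul_eq_one (hp1 : p 1 = 1) {x y : E} (hy : p y = 1)
    (hyx : proj p (y * x) = 1) : y = proj p x⁻¹ := by
  have hmem : y * x ∈ H := (proj_eq_one_iff hp hp1).1 hyx
  calc y = proj p y := (proj_of_apply_eq_one hy).symm
    _ = proj p ((⟨y * x, hmem⟩ : H) * x⁻¹) := by rw [Subgroup.coe_mk, mul_inv_cancel_right]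
    _ = proj p x⁻¹ := proj_coe_mul hp _ _

theorem existsUnique_proj_mul_eq_one (hp1 : p 1 = 1) (x : E) :
    ∃! y : E, p y = 1 ∧ proj p (y * x) = 1 := by
  refine ⟨proj p x⁻¹, ⟨apply_proj hp _, ?_⟩, fun y ⟨hy, hyx⟩ => ?_⟩
  · rw [proj_proj_mul hp, inv_mul_cancel, proj_of_apply_eq_one hp1]
  · exact eq_proj_inv_of_proj_mul_eq_one hp hp1 hy hyx

end LinearRetraction

open LinearRetraction in
/-- Let `H` be a subgroup of a group `E`, `p : E → H` an `H`-linear retraction,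
`S = p⁻¹(1)`, and `▷, ◁, f, ∗` the maps defined from `p`:
`s ▷ h = p (s h)`, `s ◁ h = p (s h)⁻¹ s h`, `f (a, b) = p (a b)`,
`a ∗ b = p (a b)⁻¹ a b`. Then:
(i) the normalization conditions `s ▷ 1 = 1`, `1 ▷ h = h`, `1 ◁ h = 1`, `s ◁ 1 = s`,
`f (s, 1) = f (1, s) = 1`, `s ∗ 1 = 1 ∗ s = s` hold;
(ii) the twisted associativity condition
`(s₁ ∗ s₂) ∗ s₃ = (s₁ ◁ f (s₂, s₃)) ∗ (s₂ ∗ s₃)` holds;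
(iii) every `s ∈ S` has a unique `s' ∈ S` with `s' ∗ s = 1`. -/
theorem retraction_normalization_twisted_assoc {E : Type*} [Group E] (H : Subgroup E)
    (p : E → H) (hp1 : p 1 = 1) (hp : ∀ (h : H) (x : E), p (↑h * x) = h * p x)
    (rho : E → H → H) (hrho : ∀ (s : E) (h : H), rho s h = p (s * ↑h))
    (act : E → H → E) (hact : ∀ (s : E) (h : H), act s h = (↑(p (s * ↑h)))⁻¹ * (s * ↑h))
    (f : E → E → H) (hf : ∀ a b : E, f a b = p (a * b))
    (star : E → E → E) (hstar : ∀ a b : E, star a b = (↑(p (a * b)))⁻¹ * (a * b)) :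
    (∀ s : E, p s = 1 → ∀ h : H,
      rho s 1 = 1 ∧ rho 1 h = h ∧ act 1 h = 1 ∧ act s 1 = s ∧
      f s 1 = 1 ∧ f 1 s = 1 ∧ star s 1 = s ∧ star 1 s = s) ∧
    (∀ s₁ s₂ s₃ : E, p s₁ = 1 → p s₂ = 1 → p s₃ = 1 →
      star (star s₁ s₂) s₃ = star (act s₁ (f s₂ s₃)) (star s₂ s₃)) ∧
    (∀ s : E, p s = 1 → ∃! s' : E, p s' = 1 ∧ star s' s = 1) := by
  obtain rfl : rho = fun s (h : H) => p (s * h) := funext₂ hrho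
  obtain rfl : act = fun s (h : H) => proj p (s * h) := funext₂ hact
  obtain rfl : f = fun a b => p (a * b) := funext₂ hf
  obtain rfl : star = fun a b => proj p (a * b) := funext₂ hstar
  refine ⟨fun s hs h => ?_, fun s₁ s₂ s₃ _ _ _ => proj_twisted_assoc hp s₁ s₂ s₃,
    fun s _ => existsUnique_proj_mul_eq_one hp hp1 s⟩
  simp only [mul_one, one_mul, OneMemClass.coe_one, hs, apply_coe hp hp1,
    (proj_eq_one_iff hp hp1).2 h.2, proj_of_apply_eq_one hs, and_self]
end

section
/- Let H be a group and Ω(H) = ((S, 1_S, ∗), ◁, ▷, f) an extending datum of H. Then the multiplication (h₁, s₁) · (h₂, s₂) = (h₁ (s₁ ▷ h₂) f(s₁ ◁ h₂, s₂), (s₁ ◁ h₂) ∗ s₂) makes H × S a group (with unit (1_H, 1_S)) if and only if the following seven conditions hold for all s, s₁, s₂, s₃ ∈ S and h, h₁, h₂ ∈ H: (ES1) s ◁ (h₁ h₂) = (s ◁ h₁) ◁ h₂ (so ◁ is a right action of H on S); (ES2) (s₁ ∗ s₂) ∗ s₃ = (s₁ ◁ f(s₂, s₃)) ∗ (s₂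 ∗ s₃); (ES3) s ▷ (h₁ h₂) = (s ▷ h₁)((s ◁ h₁) ▷ h₂); (ES4) (s₁ ∗ s₂) ◁ h = (s₁ ◁ (s₂ ▷ h)) ∗ (s₂ ◁ h); (ES5) (s₁ ▷ (s₂ ▷ h)) f(s₁ ◁ (s₂ ▷ h), s₂ ◁ h) = f(s₁, s₂)((s₁ ∗ s₂) ▷ h); (ES6) f(s₁, s₂) f(s₁ ∗ s₂, s₃) = (s₁ ▷ f(s₂, s₃)) f(s₁ ◁ f(s₂, s₃), s₂ ∗ s₃); (ES7) for every s ∈ S there exists s' ∈ S with s' ∗ s = 1_S. -/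
universe u v

/-- An extending datum `Ω(H) = ((S, 1_S, ∗), ◁, ▷, f)` of a group `H`:
a pointed set `(S, one)`, a binary operation `mul = ∗` with unit `one`,
maps `act = ◁ : S × H → S`, `rho = ▷ : S × H → H`, `f : S × S → H`
satisfying the normalization conditions. -/
structure ExtendingDatum (H : Type u) [Group H] (S : Type v) where
  one : S
  mul : S → S → S
  act : S → H → S
  rho : S → H → H
  f : S → S → H
  mul_one' : ∀ s, mul s one = s
  one_mul' : ∀ s, mul one s = s
  act_one' : ∀ s, act s 1 = s
  one_act' : ∀ h, act one h = one
  one_rho' : ∀ h, rho one h = h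
  rho_one' : ∀ s, rho s 1 = 1
  f_one_right' : ∀ s, f s one = 1
  f_one_left' : ∀ s, f one s = 1

variable {H : Type u} [Group H] {S : Type v}

/-- The multiplication of the (prospective) unified product `H ⋉ S` on the set `H × S`:
`(h₁, s₁) · (h₂, s₂) = (h₁ (s₁ ▷ h₂) f(s₁ ◁ h₂, s₂), (s₁ ◁ h₂) ∗ s₂)`. -/
def ExtendingDatum.Mul (Ω : ExtendingDatum H S) (x y : H × S) : H × S :=
  (x.1 * Ω.rho x.2 y.1 * Ω.f (Ω.act x.2 y.1) y.2, Ω.mul (Ω.act x.2 y.1) y.2)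

/-- `Ω` is a group extending structure of `H` when the multiplication `Ω.Mul` makes
`H × S` a group with unit `(1_H, 1_S)` (a monoid in which every element has a left
inverse is a group). The resulting group is the unified product `H ⋉ S`. -/
def IsGroupExtendingStructure (Ω : ExtendingDatum H S) : Prop :=
  (∀ a b c : H × S, Ω.Mul (Ω.Mul a b) c = Ω.Mul a (Ω.Mul b c)) ∧
  (∀ a : H × S, Ω.Mul ((1 : H), Ω.one) a = a) ∧
  (∀ a : H × S, Ω.Mul a ((1 : H), Ω.one) = a) ∧
  (∀ a : H × S, ∃ b : H × S, Ω.Mul b a = ((1 : H), Ω.one))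

/-!
Associativity of the product on the triples `(1, s)(h₁, 1)(h₂, 1)`, `(1, s₁)(1, s₂)(1, s₃)` and
`(1, s₁)(1, s₂)(h, 1)` is, component by component, exactly (ES1)/(ES3), (ES2)/(ES6) and
(ES4)/(ES5), and a left inverse of `(1, s)` has a left inverse of `s` as its second component.
Conversely, (ES1)–(ES6) give associativity: in the first component, once
`s₁ ▷ (h₂ (s₂ ▷ h₃) f(s₂ ◁ h₃, s₃))` is expanded by (ES1) and (ES3), the two sides are matched by
one application each of (ES5) and (ES6). Finally, if `s' ∗ s = 1` then
`((s' ◁ h⁻¹) ▷ h · f(s', s))⁻¹, s' ◁ h⁻¹)` is a left inverse of `(h, s)`.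
-/

namespace ExtendingDatum

variable (Ω : ExtendingDatum H S)

def ES1 : Prop := ∀ (s : S) (h₁ h₂ : H), Ω.act s (h₁ * h₂) = Ω.act (Ω.act s h₁) h₂

def ES2 : Prop := ∀ s₁ s₂ s₃ : S,
  Ω.mul (Ω.mul s₁ s₂) s₃ = Ω.mul (Ω.act s₁ (Ω.f s₂ s₃)) (Ω.mul s₂ s₃)

def ES3 : Prop := ∀ (s : S) (h₁ h₂ : H),
  Ω.rho s (h₁ * h₂) = Ω.rho s h₁ * Ω.rho (Ω.act s h₁) h₂

def ES4 : Prop := ∀ (s₁ s₂ : S) (h : H),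
  Ω.act (Ω.mul s₁ s₂) h = Ω.mul (Ω.act s₁ (Ω.rho s₂ h)) (Ω.act s₂ h)

def ES5 : Prop := ∀ (s₁ s₂ : S) (h : H),
  Ω.rho s₁ (Ω.rho s₂ h) * Ω.f (Ω.act s₁ (Ω.rho s₂ h)) (Ω.act s₂ h)
    = Ω.f s₁ s₂ * Ω.rho (Ω.mul s₁ s₂) h

def ES6 : Prop := ∀ s₁ s₂ s₃ : S,
  Ω.f s₁ s₂ * Ω.f (Ω.mul s₁ s₂) s₃
    = Ω.rho s₁ (Ω.f s₂ s₃) * Ω.f (Ω.act s₁ (Ω.f s₂ s₃)) (Ω.mul s₂ s₃)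

def ES7 : Prop := ∀ s : S, ∃ s' : S, Ω.mul s' s = Ω.one

theorem one_Mul (a : H × S) : Ω.Mul (1, Ω.one) a = a := by
  simp [Mul, Ω.one_act', Ω.one_rho', Ω.one_mul', Ω.f_one_left']

theorem Mul_one (a : H × S) : Ω.Mul a (1, Ω.one) = a := by
  simp [Mul, Ω.act_one', Ω.rho_one', Ω.mul_one', Ω.f_one_right']

variable {Ω}

theorem es1_and_es3_of_assoc (hA : ∀ a b c : H × S, Ω.Mul (Ω.Mul a b) c = Ω.Mul a (Ω.Mul b c)) :
    Ω.ES1 ∧ Ω.ES3 := by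
  have key (s : S) (h₁ h₂ : H) : Ω.rho s h₁ * Ω.rho (Ω.act s h₁) h₂ = Ω.rho s (h₁ * h₂) ∧
      Ω.act (Ω.act s h₁) h₂ = Ω.act s (h₁ * h₂) := by
    simpa only [Mul, Ω.mul_one', Ω.one_act', Ω.one_rho', Ω.f_one_right', one_mul, mul_one,
      Prod.mk.injEq] using hA (1, s) (h₁, Ω.one) (h₂, Ω.one)
  exact ⟨fun s h₁ h₂ => (key s h₁ h₂).2.symm, fun s h₁ h₂ => (key s h₁ h₂).1.symm⟩

theorem es2_and_es6_of_assoc (hA : ∀ a b c : H × S, Ω.Mul (Ω.Mul a b) c = Ω.Mul a (Ω.Mul b c)) :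
    Ω.ES2 ∧ Ω.ES6 := by
  have key (s₁ s₂ s₃ : S) :
      Ω.f s₁ s₂ * Ω.f (Ω.mul s₁ s₂) s₃
          = Ω.rho s₁ (Ω.f s₂ s₃) * Ω.f (Ω.act s₁ (Ω.f s₂ s₃)) (Ω.mul s₂ s₃) ∧
        Ω.mul (Ω.mul s₁ s₂) s₃ = Ω.mul (Ω.act s₁ (Ω.f s₂ s₃)) (Ω.mul s₂ s₃) := by
    simpa only [Mul, Ω.act_one', Ω.rho_one', one_mul, mul_one, Prod.mk.injEq]
      using hA (1, s₁) (1, s₂) (1, s₃)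
  exact ⟨fun s₁ s₂ s₃ => (key s₁ s₂ s₃).2, fun s₁ s₂ s₃ => (key s₁ s₂ s₃).1⟩

theorem es4_and_es5_of_assoc (hA : ∀ a b c : H × S, Ω.Mul (Ω.Mul a b) c = Ω.Mul a (Ω.Mul b c)) :
    Ω.ES4 ∧ Ω.ES5 := by
  have key (s₁ s₂ : S) (h : H) :
      Ω.f s₁ s₂ * Ω.rho (Ω.mul s₁ s₂) h
          = Ω.rho s₁ (Ω.rho s₂ h) * Ω.f (Ω.act s₁ (Ω.rho s₂ h)) (Ω.act s₂ h) ∧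
        Ω.act (Ω.mul s₁ s₂) h = Ω.mul (Ω.act s₁ (Ω.rho s₂ h)) (Ω.act s₂ h) := by
    simpa only [Mul, Ω.mul_one', Ω.act_one', Ω.rho_one', Ω.f_one_right', one_mul, mul_one,
      Prod.mk.injEq] using hA (1, s₁) (1, s₂) (h, Ω.one)
  exact ⟨fun s₁ s₂ h => (key s₁ s₂ h).2, fun s₁ s₂ h => (key s₁ s₂ h).1.symm⟩

theorem es7_of_exists_left_inv (hI : ∀ a : H × S, ∃ b : H × S, Ω.Mul b a = (1, Ω.one)) :
    Ω.ES7 := fun s => by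
  obtain ⟨b, hb⟩ := hI (1, s)
  exact ⟨b.2, by simpa only [Mul, Ω.act_one'] using congrArg Prod.snd hb⟩

theorem rho_mul_mul (es1 : Ω.ES1) (es3 : Ω.ES3) (s : S) (a b c : H) :
    Ω.rho s (a * b * c)
      = Ω.rho s a * Ω.rho (Ω.act s a) b * Ω.rho (Ω.act (Ω.act s a) b) c := by
  rw [es3, es3, es1]

theorem Mul_assoc_fst (es1 : Ω.ES1) (es3 : Ω.ES3) (es4 : Ω.ES4) (es5 : Ω.ES5) (es6 : Ω.ES6)
    (x y z : H × S) : (Ω.Mul (Ω.Mul x y) z).1 = (Ω.Mul x (Ω.Mul y z)).1 := by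
  obtain ⟨h₁, s₁⟩ := x
  obtain ⟨h₂, s₂⟩ := y
  obtain ⟨h₃, s₃⟩ := z
  simp only [Mul]
  rw [rho_mul_mul es1 es3, es1, es1, es4]
  set A := Ω.act s₁ h₂
  set B := Ω.act A (Ω.rho s₂ h₃)
  set C := Ω.act s₂ h₃
  have e₅ : Ω.f A s₂ * Ω.rho (Ω.mul A s₂) h₃ = Ω.rho A (Ω.rho s₂ h₃) * Ω.f B C :=
    (es5 A s₂ h₃).symm
  have e₆ : Ω.f B C * Ω.f (Ω.mul B C) s₃
      = Ω.rho B (Ω.f C s₃) * Ω.f (Ω.act B (Ω.f C s₃)) (Ω.mul C s₃) :=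
    es6 B C s₃
  calc _ = h₁ * Ω.rho s₁ h₂ * (Ω.f A s₂ * Ω.rho (Ω.mul A s₂) h₃) * Ω.f (Ω.mul B C) s₃ := by
        group
    _ = h₁ * Ω.rho s₁ h₂ * Ω.rho A (Ω.rho s₂ h₃) * (Ω.f B C * Ω.f (Ω.mul B C) s₃) := by
        rw [e₅]; group
    _ = _ := by rw [e₆]; group

theorem Mul_assoc_snd (es1 : Ω.ES1) (es2 : Ω.ES2) (es4 : Ω.ES4) (x y z : H × S) :
    (Ω.Mul (Ω.Mul x y) z).2 = (Ω.Mul x (Ω.Mul y z)).2 := by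
  simp only [Mul]
  rw [es4, es2, es1, es1]

theorem Mul_assoc (es1 : Ω.ES1) (es2 : Ω.ES2) (es3 : Ω.ES3) (es4 : Ω.ES4) (es5 : Ω.ES5)
    (es6 : Ω.ES6) (x y z : H × S) : Ω.Mul (Ω.Mul x y) z = Ω.Mul x (Ω.Mul y z) :=
  Prod.ext (Mul_assoc_fst es1 es3 es4 es5 es6 x y z) (Mul_assoc_snd es1 es2 es4 x y z)

theorem exists_left_inv (es1 : Ω.ES1) (es7 : Ω.ES7) (a : H × S) :
    ∃ b : H × S, Ω.Mul b a = (1, Ω.one) := by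
  obtain ⟨h, s⟩ := a
  obtain ⟨s', hs'⟩ := es7 s
  have hact : Ω.act (Ω.act s' h⁻¹) h = s' := by rw [← es1, inv_mul_cancel, Ω.act_one']
  refine ⟨((Ω.rho (Ω.act s' h⁻¹) h * Ω.f s' s)⁻¹, Ω.act s' h⁻¹), ?_⟩
  simp only [Mul, hact, hs', Prod.mk.injEq, and_true]
  group

end ExtendingDatum

/-- **Theorem (construction of the unified product).** Let `H` be a group and
`Ω(H) = ((S, 1_S, ∗), ◁, ▷, f)` an extending datum of `H`. The multiplication
`(h₁, s₁) · (h₂, s₂) = (h₁ (s₁ ▷ h₂) f(s₁ ◁ h₂, s₂), (s₁ ◁ h₂) ∗ s₂)` makes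
`H × S` a group (with unit `(1_H, 1_S)`) if and only if the axioms (ES1)–(ES7) hold. -/
theorem isGroupExtendingStructure_iff (Ω : ExtendingDatum H S) :
    IsGroupExtendingStructure Ω ↔
      ((∀ (s : S) (h₁ h₂ : H), Ω.act s (h₁ * h₂) = Ω.act (Ω.act s h₁) h₂) ∧
       (∀ s₁ s₂ s₃ : S,
          Ω.mul (Ω.mul s₁ s₂) s₃ = Ω.mul (Ω.act s₁ (Ω.f s₂ s₃)) (Ω.mul s₂ s₃)) ∧
       (∀ (s : S) (h₁ h₂ : H),
          Ω.rho s (h₁ * h₂) = Ω.rho s h₁ * Ω.rho (Ω.act s h₁) h₂) ∧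
       (∀ (s₁ s₂ : S) (h : H),
          Ω.act (Ω.mul s₁ s₂) h = Ω.mul (Ω.act s₁ (Ω.rho s₂ h)) (Ω.act s₂ h)) ∧
       (∀ (s₁ s₂ : S) (h : H),
          Ω.rho s₁ (Ω.rho s₂ h) * Ω.f (Ω.act s₁ (Ω.rho s₂ h)) (Ω.act s₂ h)
            = Ω.f s₁ s₂ * Ω.rho (Ω.mul s₁ s₂) h) ∧
       (∀ s₁ s₂ s₃ : S,
          Ω.f s₁ s₂ * Ω.f (Ω.mul s₁ s₂) s₃
            = Ω.rho s₁ (Ω.f s₂ s₃) * Ω.f (Ω.act s₁ (Ω.f s₂ s₃)) (Ω.mul s₂ s₃)) ∧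
       (∀ s : S, ∃ s' : S, Ω.mul s' s = Ω.one)) := by
  show IsGroupExtendingStructure Ω ↔ Ω.ES1 ∧ Ω.ES2 ∧ Ω.ES3 ∧ Ω.ES4 ∧ Ω.ES5 ∧ Ω.ES6 ∧ Ω.ES7
  constructor
  · rintro ⟨hA, -, -, hI⟩
    obtain ⟨es1, es3⟩ := ExtendingDatum.es1_and_es3_of_assoc hA
    obtain ⟨es2, es6⟩ := ExtendingDatum.es2_and_es6_of_assoc hA
    obtain ⟨es4, es5⟩ := ExtendingDatum.es4_and_es5_of_assoc hA
    exact ⟨es1, es2, es3, es4, es5, es6, ExtendingDatum.es7_of_exists_left_inv hI⟩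
  · rintro ⟨es1, es2, es3, es4, es5, es6, es7⟩
    exact ⟨ExtendingDatum.Mul_assoc es1 es2 es3 es4 es5 es6, Ω.one_Mul, Ω.Mul_one,
      ExtendingDatum.exists_left_inv es1 es7⟩
end

section
/- Let H be a group, E a set containing H, and · a group structure on E such that H is a subgroup of (E, ·). Then there exists a group extending structure Ω(H) = ((S, 1_S, ∗), ◁, ▷, f) of H and an isomorphism of groups ψ : H ⋉ S → (E, ·) such that ψ(h, 1_S) = h for all h ∈ H (i.e., ψ stabilizes H). -/
universe u v

variable {H : Type u} [Group H] {S : Type v}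

/-!
Choose a right transversal `T` of `H` in `E` containing `1`. Every `g ∈ E` factors uniquely as
`g = h t` with `h ∈ H`, `t ∈ T`; reading off the two factors of `s h` and of `s t` defines
`◁, ▷` and `∗, f`, and `(h, t) ↦ h t` is then a multiplicative bijection `H × T → E`.
Transporting the group structure of `E` back along it shows that `H × T` is a group.
-/

theorem ExtendingDatum.mul_one_one (Ω : ExtendingDatum H S) :
    Ω.Mul (1, Ω.one) (1, Ω.one) = (1, Ω.one) := by
  simp only [ExtendingDatum.Mul, Ω.act_one', Ω.rho_one', Ω.f_one_right', Ω.mul_one', mul_one]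

theorem IsGroupExtendingStructure.of_bijective {G : Type*} [Group G] {Ω : ExtendingDatum H S}
    {ψ : H × S → G} (hψ : Function.Bijective ψ)
    (hmul : ∀ a b, ψ (Ω.Mul a b) = ψ a * ψ b) : IsGroupExtendingStructure Ω := by
  have hone : ψ (1, Ω.one) = 1 := by
    have h := hmul (1, Ω.one) (1, Ω.one)
    rw [Ω.mul_one_one] at h
    exact right_eq_mul.mp h
  refine ⟨fun a b c => hψ.1 ?_, fun a => hψ.1 ?_, fun a => hψ.1 ?_, fun a => ?_⟩
  · rw [hmul, hmul, hmul, hmul, mul_assoc]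
  · rw [hmul, hone, one_mul]
  · rw [hmul, hone, mul_one]
  · obtain ⟨b, hb⟩ := hψ.2 (ψ a)⁻¹
    exact ⟨b, hψ.1 (by rw [hmul, hb, inv_mul_cancel, hone])⟩

namespace Subgroup.IsComplement

variable {E : Type u} [Group E] {K : Subgroup E} {T : Set E}

noncomputable def extendingDatum (hT : IsComplement (K : Set E) T) (h1 : (1 : E) ∈ T) :
    ExtendingDatum K T where
  one := ⟨1, h1⟩
  mul s t := (hT.equiv (s * t)).2
  act s h := (hT.equiv (s * h)).2
  rho s h := (hT.equiv (s * h)).1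
  f s t := (hT.equiv (s * t)).1
  mul_one' s := by simpa using hT.equiv_snd_eq_self_of_mem_of_one_mem K.one_mem s.2
  one_mul' s := by simpa using hT.equiv_snd_eq_self_of_mem_of_one_mem K.one_mem s.2
  act_one' s := by simpa using hT.equiv_snd_eq_self_of_mem_of_one_mem K.one_mem s.2
  one_act' h := by simpa using hT.equiv_snd_eq_one_of_mem_of_one_mem h1 h.2
  one_rho' h := by simpa using hT.equiv_fst_eq_self_of_mem_of_one_mem h1 h.2
  rho_one' s := by
    rw [OneMemClass.coe_one, mul_one]; exact hT.equiv_fst_eq_one_of_mem_of_one_mem K.one_mem s.2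
  f_one_right' s := by
    rw [mul_one]; exact hT.equiv_fst_eq_one_of_mem_of_one_mem K.one_mem s.2
  f_one_left' s := by
    rw [one_mul]; exact hT.equiv_fst_eq_one_of_mem_of_one_mem K.one_mem s.2

theorem extendingDatum_mul (hT : IsComplement (K : Set E) T) (h1 : (1 : E) ∈ T)
    (a b : K × T) :
    (((hT.extendingDatum h1).Mul a b).1 : E) * ((hT.extendingDatum h1).Mul a b).2 =
      (a.1 * a.2) * (b.1 * b.2) := by
  obtain ⟨h₁, s₁⟩ := a
  obtain ⟨h₂, s₂⟩ := b
  set c := hT.equiv (s₁ * h₂)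
  have hc : (c.1 : E) * c.2 = s₁ * h₂ := hT.equiv_fst_mul_equiv_snd _
  have hd : ((hT.equiv (c.2 * s₂)).1 : E) * (hT.equiv (c.2 * s₂)).2 = c.2 * s₂ :=
    hT.equiv_fst_mul_equiv_snd _
  calc (h₁ * c.1 * (hT.equiv (c.2 * s₂)).1 : E) * (hT.equiv (c.2 * s₂)).2
      = h₁ * ((c.1 * c.2) * s₂) := by rw [mul_assoc, hd]; group
    _ = h₁ * s₁ * (h₂ * s₂) := by rw [hc]; group

end Subgroup.IsComplement

/-- Let `H` be a subgroup of a group `(E, ·)`. Then there exists a group extending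
structure `Ω(H) = ((S, 1_S, ∗), ◁, ▷, f)` of `H` and an isomorphism of groups
`ψ : H ⋉ S → (E, ·)` (a bijective map that transforms the unified product
multiplication into the multiplication of `E`) such that `ψ (h, 1_S) = h` for all
`h ∈ H`, i.e. `ψ` stabilizes `H`. -/
theorem exists_unified_product_iso {E : Type u} [Group E] (K : Subgroup E) :
    ∃ (S : Type u) (Ω : ExtendingDatum K S),
      IsGroupExtendingStructure Ω ∧
      ∃ ψ : K × S → E,
        Function.Bijective ψ ∧
        (∀ a b : K × S, ψ (Ω.Mul a b) = ψ a * ψ b) ∧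
        ∀ h : K, ψ (h, Ω.one) = ↑h := by
  obtain ⟨T, hT, h1⟩ := K.exists_isComplement_right 1
  have hmul := hT.extendingDatum_mul h1
  exact ⟨T, hT.extendingDatum h1, .of_bijective hT hmul, _, hT, hmul, fun h => mul_one _⟩
end

section
/- Let H be a group. A system Ω(H) = ((S, 1_S, ∗), ◁, ▷, f) is a group extending structure of H if and only if there exists a group E containing H as a subgroup and a map p : E → H with p(1) = 1 and p(h·x) = h·p(x) for all h ∈ H, x ∈ E, such that S = p⁻¹(1) and the operations are given by s ▷ h = p(s h), s ◁ h = p(s h)⁻¹ s h, f(s₁, s₂) = p(s₁ s₂), s₁ ∗ s₂ = p(s₁ s₂)⁻¹ s₁ s₂ for all s, s₁, s₂ ∈ S and h ∈ H. -/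
/-!
If `Ω` is a group extending structure, take `E = H ⋉ S` itself, with `H` embedded as
`h ↦ (h, 1_S)`, `p` the first projection and `S` as the elements `(1_H, s)`; the four operations
are read off the factorization `(h, s) = (h, 1_S) (1_H, s)` of the products `(1, s) (h, 1)` and
`(1, s₁) (1, s₂)`. Conversely, in a realization `s h = (s ▷ h) (s ◁ h)` and
`s₁ s₂ = f(s₁, s₂) (s₁ ∗ s₂)`, so `(h, s) ↦ h s` is a bijection `H × S → E` carrying the
multiplication of `Ω` to that of `E`, and the group axioms transfer along it.
-/

universe u v

variable {H : Type u} [Group H] {S : Type v}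

/-- A realization of an extending datum `Ω` of `H` on `S`: a group `E` containing `H`
as a subgroup (via the injective morphism `i`), together with a map `p : E → H` with
`p 1 = 1` and `p (h x) = h p x`, such that `S` is identified (via the injection `e`)
with the fiber `p⁻¹(1)` in such a way that the distinguished point and the four
operations of `Ω` correspond to the ones induced by `p`:
`s ▷ h = p (s h)`, `s ◁ h = p (s h)⁻¹ s h`, `f (s₁, s₂) = p (s₁ s₂)`,
`s₁ ∗ s₂ = p (s₁ s₂)⁻¹ s₁ s₂`. -/
structure Realization {H : Type u} [Group H] {S : Type v}
    (Ω : ExtendingDatum H S) where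
  E : Type (max u v)
  [grp : Group E]
  i : H →* E
  i_inj : Function.Injective i
  p : E → H
  p_one : p 1 = 1
  p_linear : ∀ (h : H) (x : E), p (i h * x) = h * p x
  e : S → E
  e_inj : Function.Injective e
  mem_range_iff : ∀ x : E, p x = 1 ↔ ∃ s : S, e s = x
  e_one : e Ω.one = 1
  rho_eq : ∀ (s : S) (h : H), Ω.rho s h = p (e s * i h)
  act_eq : ∀ (s : S) (h : H), e (Ω.act s h) = (i (p (e s * i h)))⁻¹ * (e s * i h)
  f_eq : ∀ s₁ s₂ : S, Ω.f s₁ s₂ = p (e s₁ * e s₂)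
  mul_eq : ∀ s₁ s₂ : S,
    e (Ω.mul s₁ s₂) = (i (p (e s₁ * e s₂)))⁻¹ * (e s₁ * e s₂)

attribute [instance] Realization.grp

namespace IsGroupExtendingStructure

variable {Ω : ExtendingDatum H S} (hΩ : IsGroupExtendingStructure Ω)

def UnifiedProduct (_hΩ : IsGroupExtendingStructure Ω) : Type (max u v) := H × S

noncomputable instance : Group (UnifiedProduct hΩ) :=
  letI : Mul (UnifiedProduct hΩ) := ⟨Ω.Mul⟩
  letI : One (UnifiedProduct hΩ) := ⟨((1 : H), Ω.one)⟩
  letI : Inv (UnifiedProduct hΩ) := ⟨fun a => Classical.choose (hΩ.2.2.2 a)⟩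
  Group.ofLeftAxioms hΩ.1 hΩ.2.1 fun a => Classical.choose_spec (hΩ.2.2.2 a)

namespace UnifiedProduct

def mk (h : H) (s : S) : UnifiedProduct hΩ := (h, s)

def toProd (x : UnifiedProduct hΩ) : H × S := x

theorem mk_toProd (x : UnifiedProduct hΩ) : mk hΩ (toProd hΩ x).1 (toProd hΩ x).2 = x := rfl

theorem mk_mul_mk (h₁ h₂ : H) (s₁ s₂ : S) :
    mk hΩ h₁ s₁ * mk hΩ h₂ s₂ = mk hΩ (h₁ * Ω.rho s₁ h₂ * Ω.f (Ω.act s₁ h₂) s₂)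
      (Ω.mul (Ω.act s₁ h₂) s₂) :=
  rfl

theorem mk_one_mul_mk (h₁ h₂ : H) (s : S) :
    mk hΩ h₁ Ω.one * mk hΩ h₂ s = mk hΩ (h₁ * h₂) s := by
  rw [mk_mul_mk, Ω.one_rho', Ω.one_act', Ω.f_one_left', Ω.one_mul', mul_one]

theorem mk_eq_mk_one_mul (h : H) (s : S) : mk hΩ h s = mk hΩ h Ω.one * mk hΩ 1 s := by
  rw [mk_one_mul_mk, mul_one]

theorem mk_mul_mk_one (s : S) (h : H) :
    mk hΩ 1 s * mk hΩ h Ω.one = mk hΩ (Ω.rho s h) (Ω.act s h) := by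
  rw [mk_mul_mk, Ω.f_one_right', Ω.mul_one', one_mul, mul_one]

theorem mk_one_mul_mk_one (s₁ s₂ : S) :
    mk hΩ 1 s₁ * mk hΩ 1 s₂ = mk hΩ (Ω.f s₁ s₂) (Ω.mul s₁ s₂) := by
  rw [mk_mul_mk, Ω.rho_one', Ω.act_one', one_mul, one_mul]

def inl : H →* UnifiedProduct hΩ where
  toFun h := mk hΩ h Ω.one
  map_one' := rfl
  map_mul' h₁ h₂ := (mk_one_mul_mk hΩ h₁ h₂ Ω.one).symm

theorem inl_apply (h : H) : inl hΩ h = mk hΩ h Ω.one := rfl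

end UnifiedProduct

open UnifiedProduct in
noncomputable def realization : Realization Ω where
  E := UnifiedProduct hΩ
  i := inl hΩ
  i_inj _ _ h := congrArg Prod.fst h
  p x := (toProd hΩ x).1
  p_one := rfl
  p_linear h x := by
    rw [← mk_toProd hΩ x]
    exact congrArg (fun y => (toProd hΩ y).1) (mk_one_mul_mk hΩ h _ _)
  e := mk hΩ 1
  e_inj _ _ h := congrArg Prod.snd h
  mem_range_iff x := by
    refine ⟨fun hx => ⟨(toProd hΩ x).2, ?_⟩, ?_⟩
    · rw [← hx, mk_toProd]
    · rintro ⟨s, rfl⟩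
      rfl
  e_one := rfl
  rho_eq s h := by rw [inl_apply, mk_mul_mk_one]; rfl
  act_eq s h := by
    rw [inl_apply hΩ h, mk_mul_mk_one, inl_apply, eq_inv_mul_iff_mul_eq]
    exact (mk_eq_mk_one_mul hΩ _ _).symm
  f_eq s₁ s₂ := by rw [mk_one_mul_mk_one]; rfl
  mul_eq s₁ s₂ := by
    rw [mk_one_mul_mk_one, inl_apply, eq_inv_mul_iff_mul_eq]
    exact (mk_eq_mk_one_mul hΩ _ _).symm

end IsGroupExtendingStructure

namespace Realization

variable {Ω : ExtendingDatum H S} (R : Realization Ω)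

def embed (x : H × S) : R.E := R.i x.1 * R.e x.2

theorem p_e (s : S) : R.p (R.e s) = 1 :=
  (R.mem_range_iff _).2 ⟨s, rfl⟩

theorem p_embed (x : H × S) : R.p (R.embed x) = x.1 := by
  rw [embed, R.p_linear, R.p_e, mul_one]

theorem i_rho_mul_e_act (s : S) (h : H) :
    R.i (Ω.rho s h) * R.e (Ω.act s h) = R.e s * R.i h := by
  rw [R.act_eq, R.rho_eq, mul_inv_cancel_left]

theorem i_f_mul_e_mul (s₁ s₂ : S) :
    R.i (Ω.f s₁ s₂) * R.e (Ω.mul s₁ s₂) = R.e s₁ * R.e s₂ := by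
  rw [R.mul_eq, R.f_eq, mul_inv_cancel_left]

theorem embed_mul (x y : H × S) : R.embed (Ω.Mul x y) = R.embed x * R.embed y := by
  obtain ⟨h₁, s₁⟩ := x
  obtain ⟨h₂, s₂⟩ := y
  calc R.i (h₁ * Ω.rho s₁ h₂ * Ω.f (Ω.act s₁ h₂) s₂) * R.e (Ω.mul (Ω.act s₁ h₂) s₂)
      = R.i h₁ * (R.i (Ω.rho s₁ h₂) * R.e (Ω.act s₁ h₂)) * R.e s₂ := by
        rw [map_mul, mul_assoc, R.i_f_mul_e_mul, map_mul]; group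
    _ = R.i h₁ * R.e s₁ * (R.i h₂ * R.e s₂) := by
        rw [R.i_rho_mul_e_act]; group

theorem embed_one : R.embed ((1 : H), Ω.one) = 1 := by
  rw [embed, map_one, R.e_one, one_mul]

theorem embed_injective : Function.Injective R.embed := by
  rintro ⟨h₁, s₁⟩ ⟨h₂, s₂⟩ heq
  have hh : h₁ = h₂ := by simpa only [p_embed] using congrArg R.p heq
  subst hh
  exact Prod.ext rfl (R.e_inj (mul_left_cancel heq))

theorem embed_surjective : Function.Surjective R.embed := by
  intro x
  obtain ⟨s, hs⟩ := (R.mem_range_iff (R.i (R.p x)⁻¹ * x)).1 (by rw [R.p_linear, inv_mul_cancel])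
  exact ⟨(R.p x, s), by rw [embed, hs, map_inv, mul_inv_cancel_left]⟩

end Realization

theorem Realization.isGroupExtendingStructure {Ω : ExtendingDatum H S} (R : Realization Ω) :
    IsGroupExtendingStructure Ω := by
  refine ⟨fun a b c => R.embed_injective ?_, fun a => R.embed_injective ?_,
    fun a => R.embed_injective ?_, fun a => ?_⟩
  · simp only [embed_mul, mul_assoc]
  · rw [embed_mul, embed_one, one_mul]
  · rw [embed_mul, embed_one, mul_one]
  · obtain ⟨b, hb⟩ := R.embed_surjective (R.embed a)⁻¹
    exact ⟨b, R.embed_injective (by rw [embed_mul, hb, inv_mul_cancel, embed_one])⟩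

/-- `Ω(H) = ((S, 1_S, ∗), ◁, ▷, f)` is a group extending structure of `H` if and only
if there exists a group `E` containing `H` as a subgroup and a unitary map `p : E → H`
with `p (h x) = h p x`, such that `S = p⁻¹(1)` and the operations of `Ω` are the ones
defined from `p`. -/
theorem isGroupExtendingStructure_iff_realization
    (Ω : ExtendingDatum H S) :
    IsGroupExtendingStructure Ω ↔ Nonempty (Realization Ω) :=
  ⟨fun hΩ => ⟨hΩ.realization⟩, fun ⟨R⟩ => R.isGroupExtendingStructure⟩
end

section
/- Let H be a group and Ω(H) = ((S, 1_S, ∗), ◁, ▷, f) an extending datum of H in which ◁ is the trivial action, i.e., s ◁ h = s for all s ∈ S, h ∈ H. Then Ω(H) is a group extending structure of H if and only if (S, ∗, 1_S) is a group and (H, (S, ∗), ▷, f) is a crossed system of groups; in this case the unified product H ⋉ S coincides (as a group on the set H × S) with the crossed product H #_▷^f (S, ∗). -/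
/-!
When `◁` is trivial the multiplication of `H × S` is literally the crossed-product formula, and
the unit laws hold for any extending datum. Comparing the two components of the associativity law
for `(h₁, s₁)(h₂, s₂)(h₃, s₃)` gives associativity of `∗` in the second component, and in the first
component the specialisations `s₂ = s₃ = 1`, `s₃ = 1, h₂ = 1` and `h₂ = h₃ = 1` give
multiplicativity of `▷`, the weak action law and the cocycle law, which conversely recombine into
the general identity. Left inverses correspond under projection to `S`. Finally, the weak action
law shows that `(s ▷ ·) ∘ (t ▷ ·)` is conjugation by `f(s, t)` whenever `s ∗ t = 1`, which makes
each `s ▷ ·` bijective once `S` is a group.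
-/

universe u v

variable {H : Type u} [Group H] {S : Type v}

namespace ExtendingDatum

variable (Ω : ExtendingDatum H S)

theorem exists_mul_eq_one_of_exists_left_inv
    (hassoc : ∀ s₁ s₂ s₃ : S, Ω.mul (Ω.mul s₁ s₂) s₃ = Ω.mul s₁ (Ω.mul s₂ s₃))
    (hinv : ∀ s : S, ∃ s' : S, Ω.mul s' s = Ω.one) (s : S) :
    ∃ t : S, Ω.mul s t = Ω.one := by
  obtain ⟨s', hs'⟩ := hinv s
  obtain ⟨s'', hs''⟩ := hinv s'
  have hs : s'' = s := calc
    s'' = Ω.mul s'' (Ω.mul s' s) := by rw [hs', Ω.mul_one']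
    _ = Ω.mul (Ω.mul s'' s') s := (hassoc _ _ _).symm
    _ = s := by rw [hs'', Ω.one_mul']
  exact ⟨s', hs ▸ hs''⟩

section WeakAction

variable (hweak : ∀ (s₁ s₂ : S) (h : H),
  Ω.rho s₁ (Ω.rho s₂ h) = Ω.f s₁ s₂ * Ω.rho (Ω.mul s₁ s₂) h * (Ω.f s₁ s₂)⁻¹)
include hweak

theorem rho_comp_rho_of_mul_eq_one {s t : S} (hst : Ω.mul s t = Ω.one) :
    Ω.rho s ∘ Ω.rho t = MulAut.conj (Ω.f s t) := by
  ext h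
  simp [hweak, hst, Ω.one_rho']

theorem rho_bijective
    (hassoc : ∀ s₁ s₂ s₃ : S, Ω.mul (Ω.mul s₁ s₂) s₃ = Ω.mul s₁ (Ω.mul s₂ s₃))
    (hinv : ∀ s : S, ∃ s' : S, Ω.mul s' s = Ω.one) (s : S) :
    Function.Bijective (Ω.rho s) := by
  obtain ⟨s', hs's⟩ := hinv s
  obtain ⟨t, hst⟩ := Ω.exists_mul_eq_one_of_exists_left_inv hassoc hinv s
  refine ⟨Function.Injective.of_comp (f := Ω.rho s') ?_,
    Function.Surjective.of_comp (g := Ω.rho t) ?_⟩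
  · rw [Ω.rho_comp_rho_of_mul_eq_one hweak hs's]
    exact (MulAut.conj _).injective
  · rw [Ω.rho_comp_rho_of_mul_eq_one hweak hst]
    exact (MulAut.conj _).surjective

end WeakAction

section TrivialAction

variable {Ω} (hact : ∀ (s : S) (h : H), Ω.act s h = s)
include hact

theorem Mul_eq_of_act_trivial (x y : H × S) :
    Ω.Mul x y = (x.1 * Ω.rho x.2 y.1 * Ω.f x.2 y.2, Ω.mul x.2 y.2) := by
  simp [ExtendingDatum.Mul, hact]

theorem Mul_assoc_mk_iff_of_act_trivial (h₁ h₂ h₃ : H) (s₁ s₂ s₃ : S) :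
    Ω.Mul (Ω.Mul (h₁, s₁) (h₂, s₂)) (h₃, s₃) = Ω.Mul (h₁, s₁) (Ω.Mul (h₂, s₂) (h₃, s₃)) ↔
      Ω.rho s₁ h₂ * Ω.f s₁ s₂ * Ω.rho (Ω.mul s₁ s₂) h₃ * Ω.f (Ω.mul s₁ s₂) s₃
          = Ω.rho s₁ (h₂ * Ω.rho s₂ h₃ * Ω.f s₂ s₃) * Ω.f s₁ (Ω.mul s₂ s₃) ∧
        Ω.mul (Ω.mul s₁ s₂) s₃ = Ω.mul s₁ (Ω.mul s₂ s₃) := by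
  simp only [Mul_eq_of_act_trivial hact, Prod.ext_iff, mul_assoc, mul_right_inj]

theorem exists_Mul_eq_one_iff_of_act_trivial :
    (∀ a : H × S, ∃ b : H × S, Ω.Mul b a = (1, Ω.one)) ↔
      ∀ s : S, ∃ s' : S, Ω.mul s' s = Ω.one := by
  simp only [Mul_eq_of_act_trivial hact, Prod.ext_iff]
  constructor
  · intro hinv s
    obtain ⟨b, -, hb⟩ := hinv (1, s)
    exact ⟨b.2, hb⟩
  · rintro hinv ⟨h, s⟩
    obtain ⟨s', hs'⟩ := hinv s
    exact ⟨((Ω.rho s' h * Ω.f s' s)⁻¹, s'), by simp, hs'⟩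

theorem Mul_assoc_iff_of_act_trivial :
    (∀ a b c : H × S, Ω.Mul (Ω.Mul a b) c = Ω.Mul a (Ω.Mul b c)) ↔
      (∀ s₁ s₂ s₃ : S, Ω.mul (Ω.mul s₁ s₂) s₃ = Ω.mul s₁ (Ω.mul s₂ s₃)) ∧
      (∀ (s : S) (h₁ h₂ : H), Ω.rho s (h₁ * h₂) = Ω.rho s h₁ * Ω.rho s h₂) ∧
      (∀ (s₁ s₂ : S) (h : H),
        Ω.rho s₁ (Ω.rho s₂ h) = Ω.f s₁ s₂ * Ω.rho (Ω.mul s₁ s₂) h * (Ω.f s₁ s₂)⁻¹) ∧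
      (∀ s₁ s₂ s₃ : S,
        Ω.f s₁ s₂ * Ω.f (Ω.mul s₁ s₂) s₃ = Ω.rho s₁ (Ω.f s₂ s₃) * Ω.f s₁ (Ω.mul s₂ s₃)) := by
  simp only [Prod.forall, Mul_assoc_mk_iff_of_act_trivial hact]
  constructor
  · intro hassoc
    refine ⟨fun s₁ s₂ s₃ => (hassoc 1 s₁ 1 s₂ 1 s₃).2, fun s h₁ h₂ => ?_,
      fun s₁ s₂ h => ?_, fun s₁ s₂ s₃ => ?_⟩
    · simpa [Ω.f_one_right', Ω.f_one_left', Ω.mul_one', Ω.one_rho'] using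
        (hassoc 1 s h₁ Ω.one h₂ Ω.one).1.symm
    · rw [eq_mul_inv_iff_mul_eq]
      simpa [Ω.f_one_right', Ω.f_one_left', Ω.mul_one', Ω.rho_one'] using
        (hassoc 1 s₁ 1 s₂ h Ω.one).1.symm
    · simpa [Ω.rho_one'] using (hassoc 1 s₁ 1 s₂ 1 s₃).1
  · rintro ⟨hassoc, hrho, hweak, hcocycle⟩ - s₁ h₂ s₂ h₃ s₃
    refine ⟨?_, hassoc s₁ s₂ s₃⟩
    rw [hrho, hrho, hweak, mul_assoc _ (Ω.rho s₁ (Ω.f s₂ s₃)), ← hcocycle]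
    group

end TrivialAction

end ExtendingDatum

/-- Let `Ω(H)` be an extending datum of `H` in which `◁` is the trivial action.
Then `Ω(H)` is a group extending structure of `H` if and only if `(S, ∗, 1_S)` is a
group and `(H, (S, ∗), ▷, f)` is a crossed system of groups (each `h ↦ s ▷ h` is an
automorphism of `H`, and the weak-action and cocycle conditions hold); in this case
the unified product `H ⋉ S` coincides, as a group structure on the set `H × S`, with
the crossed product `H #_▷^f (S, ∗)`. -/
theorem trivial_act_iff_crossed_system (Ω : ExtendingDatum H S)
    (hact : ∀ (s : S) (h : H), Ω.act s h = s) :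
    (IsGroupExtendingStructure Ω ↔
      ((∀ s₁ s₂ s₃ : S, Ω.mul (Ω.mul s₁ s₂) s₃ = Ω.mul s₁ (Ω.mul s₂ s₃)) ∧
       (∀ s : S, ∃ s' : S, Ω.mul s' s = Ω.one) ∧
       (∀ s : S, Function.Bijective (Ω.rho s)) ∧
       (∀ (s : S) (h₁ h₂ : H), Ω.rho s (h₁ * h₂) = Ω.rho s h₁ * Ω.rho s h₂) ∧
       (∀ (s₁ s₂ : S) (h : H),
          Ω.rho s₁ (Ω.rho s₂ h)
            = Ω.f s₁ s₂ * Ω.rho (Ω.mul s₁ s₂) h * (Ω.f s₁ s₂)⁻¹) ∧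
       (∀ s₁ s₂ s₃ : S,
          Ω.f s₁ s₂ * Ω.f (Ω.mul s₁ s₂) s₃
            = Ω.rho s₁ (Ω.f s₂ s₃) * Ω.f s₁ (Ω.mul s₂ s₃)))) ∧
    (∀ x y : H × S,
      Ω.Mul x y = (x.1 * Ω.rho x.2 y.1 * Ω.f x.2 y.2, Ω.mul x.2 y.2)) := by
  refine ⟨⟨fun ⟨hMul, _, _, hMulInv⟩ => ?_, fun ⟨hassoc, hinv, _, hrho, hweak, hcocycle⟩ => ?_⟩,
    ExtendingDatum.Mul_eq_of_act_trivial hact⟩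
  · obtain ⟨hassoc, hrho, hweak, hcocycle⟩ :=
      (ExtendingDatum.Mul_assoc_iff_of_act_trivial hact).1 hMul
    have hinv := (ExtendingDatum.exists_Mul_eq_one_iff_of_act_trivial hact).1 hMulInv
    exact ⟨hassoc, hinv, Ω.rho_bijective hweak hassoc hinv, hrho, hweak, hcocycle⟩
  · exact ⟨(ExtendingDatum.Mul_assoc_iff_of_act_trivial hact).2 ⟨hassoc, hrho, hweak, hcocycle⟩,
      Ω.one_Mul, Ω.Mul_one, (ExtendingDatum.exists_Mul_eq_one_iff_of_act_trivial hact).2 hinv⟩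
end

section
/- Let H be a group and Ω(H) = ((S, 1_S, ∗), ◁, ▷, f) an extending datum of H in which f is the trivial cocycle, i.e., f(s₁, s₂) = 1_H for all s₁, s₂ ∈ S. Then Ω(H) is a group extending structure of H if and only if (S, ∗, 1_S) is a group and (H, (S, ∗), ▷, ◁) is a matched pair of groups; in this case the unified product H ⋉ S coincides (as a group on the set H × S) with the bicrossed product H ⋈ (S, ∗). -/
universe u v

variable {H : Type u} [Group H] {S : Type v}

/-! With `f = 1` the unified product multiplication is the bicrossed one. Associativity
tested on the triples `(1, s₁)(1, s₂)(1, s₃)`, `(1, s₁)(1, s₂)(h, 1)` and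
`(1, s)(h₁, 1)(h₂, 1)` yields exactly the axioms of a matched pair; conversely these
axioms are what the bicrossed product needs to be associative, and
`(((s' ◁ h⁻¹) ▷ h)⁻¹, s' ◁ h⁻¹)` is a left inverse of `(h, s)` whenever `s' ∗ s = 1_S`. -/

namespace ExtendingDatum

attribute [local simp] mul_one' one_mul' act_one' one_act' one_rho' rho_one'

variable (Ω : ExtendingDatum H S)

def bicrossedMul (x y : H × S) : H × S :=
  (x.1 * Ω.rho x.2 y.1, Ω.mul (Ω.act x.2 y.1) y.2)

theorem mul_eq_bicrossedMul (hf : ∀ s₁ s₂ : S, Ω.f s₁ s₂ = 1) :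
    Ω.Mul = Ω.bicrossedMul := by
  funext x y
  simp [ExtendingDatum.Mul, bicrossedMul, hf]

theorem one_bicrossedMul (x : H × S) : Ω.bicrossedMul (1, Ω.one) x = x := by
  simp [bicrossedMul]

theorem bicrossedMul_one (x : H × S) : Ω.bicrossedMul x (1, Ω.one) = x := by
  simp [bicrossedMul]

variable {Ω}

theorem mul_assoc_of_bicrossedMul_assoc (hassoc : Std.Associative Ω.bicrossedMul)
    (s₁ s₂ s₃ : S) : Ω.mul (Ω.mul s₁ s₂) s₃ = Ω.mul s₁ (Ω.mul s₂ s₃) := by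
  simpa [bicrossedMul] using congrArg Prod.snd (hassoc.assoc (1, s₁) (1, s₂) (1, s₃))

theorem rho_mul_of_bicrossedMul_assoc (hassoc : Std.Associative Ω.bicrossedMul)
    (s₁ s₂ : S) (h : H) : Ω.rho (Ω.mul s₁ s₂) h = Ω.rho s₁ (Ω.rho s₂ h) := by
  simpa [bicrossedMul] using congrArg Prod.fst (hassoc.assoc (1, s₁) (1, s₂) (h, Ω.one))

theorem act_mul_left_of_bicrossedMul_assoc (hassoc : Std.Associative Ω.bicrossedMul)
    (s₁ s₂ : S) (h : H) :
    Ω.act (Ω.mul s₁ s₂) h = Ω.mul (Ω.act s₁ (Ω.rho s₂ h)) (Ω.act s₂ h) := by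
  simpa [bicrossedMul] using congrArg Prod.snd (hassoc.assoc (1, s₁) (1, s₂) (h, Ω.one))

theorem rho_mul_right_of_bicrossedMul_assoc (hassoc : Std.Associative Ω.bicrossedMul)
    (s : S) (h₁ h₂ : H) : Ω.rho s (h₁ * h₂) = Ω.rho s h₁ * Ω.rho (Ω.act s h₁) h₂ := by
  simpa [bicrossedMul] using
    (congrArg Prod.fst (hassoc.assoc (1, s) (h₁, Ω.one) (h₂, Ω.one))).symm

theorem act_mul_of_bicrossedMul_assoc (hassoc : Std.Associative Ω.bicrossedMul)
    (s : S) (h₁ h₂ : H) : Ω.act s (h₁ * h₂) = Ω.act (Ω.act s h₁) h₂ := by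
  simpa [bicrossedMul] using
    (congrArg Prod.snd (hassoc.assoc (1, s) (h₁, Ω.one) (h₂, Ω.one))).symm

theorem bicrossedMul_assoc
    (hS : ∀ s₁ s₂ s₃ : S, Ω.mul (Ω.mul s₁ s₂) s₃ = Ω.mul s₁ (Ω.mul s₂ s₃))
    (hrho : ∀ (s₁ s₂ : S) (h : H), Ω.rho (Ω.mul s₁ s₂) h = Ω.rho s₁ (Ω.rho s₂ h))
    (hact : ∀ (s : S) (h₁ h₂ : H), Ω.act s (h₁ * h₂) = Ω.act (Ω.act s h₁) h₂)
    (hrho_mul : ∀ (s : S) (h₁ h₂ : H),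
      Ω.rho s (h₁ * h₂) = Ω.rho s h₁ * Ω.rho (Ω.act s h₁) h₂)
    (hact_mul : ∀ (s₁ s₂ : S) (h : H),
      Ω.act (Ω.mul s₁ s₂) h = Ω.mul (Ω.act s₁ (Ω.rho s₂ h)) (Ω.act s₂ h)) :
    Std.Associative Ω.bicrossedMul := by
  refine ⟨fun ⟨h₁, s₁⟩ ⟨h₂, s₂⟩ ⟨h₃, s₃⟩ => ?_⟩
  simp only [bicrossedMul, Prod.mk.injEq]
  exact ⟨by rw [hrho_mul, hrho, mul_assoc], by rw [hact, hact_mul, hS]⟩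

theorem exists_mul_eq_one_of_bicrossedMul_eq_one {s : S} {x : H × S}
    (hx : Ω.bicrossedMul x (1, s) = (1, Ω.one)) : ∃ s', Ω.mul s' s = Ω.one :=
  ⟨x.2, by simpa [bicrossedMul] using congrArg Prod.snd hx⟩

theorem exists_bicrossedMul_eq_one (hS : ∀ s : S, ∃ s' : S, Ω.mul s' s = Ω.one)
    (hact : ∀ (s : S) (h₁ h₂ : H), Ω.act s (h₁ * h₂) = Ω.act (Ω.act s h₁) h₂) (x : H × S) :
    ∃ y, Ω.bicrossedMul y x = (1, Ω.one) := by
  obtain ⟨s', hs'⟩ := hS x.2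
  have hcancel : Ω.act (Ω.act s' x.1⁻¹) x.1 = s' := by
    rw [← hact, inv_mul_cancel, act_one']
  exact ⟨((Ω.rho (Ω.act s' x.1⁻¹) x.1)⁻¹, Ω.act s' x.1⁻¹),
    by simp [bicrossedMul, hcancel, hs']⟩

end ExtendingDatum

/-- Let `Ω(H)` be an extending datum of `H` in which `f` is the trivial cocycle.
Then `Ω(H)` is a group extending structure of `H` if and only if `(S, ∗, 1_S)` is a
group and `(H, (S, ∗), ▷, ◁)` is a matched pair of groups (`▷` is a left action of
the group `(S, ∗)` on the set `H`, `◁` is a right action of the group `H` on the set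
`S`, and the two matched-pair compatibility conditions hold); in this case the unified
product `H ⋉ S` coincides, as a group structure on the set `H × S`, with the
bicrossed product `H ⋈ (S, ∗)`. -/
theorem trivial_cocycle_iff_matched_pair (Ω : ExtendingDatum H S)
    (hf : ∀ s₁ s₂ : S, Ω.f s₁ s₂ = 1) :
    (IsGroupExtendingStructure Ω ↔
      ((∀ s₁ s₂ s₃ : S, Ω.mul (Ω.mul s₁ s₂) s₃ = Ω.mul s₁ (Ω.mul s₂ s₃)) ∧
       (∀ s : S, ∃ s' : S, Ω.mul s' s = Ω.one) ∧
       (∀ (s₁ s₂ : S) (h : H),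
          Ω.rho (Ω.mul s₁ s₂) h = Ω.rho s₁ (Ω.rho s₂ h)) ∧
       (∀ (s : S) (h₁ h₂ : H), Ω.act s (h₁ * h₂) = Ω.act (Ω.act s h₁) h₂) ∧
       (∀ (s : S) (h₁ h₂ : H),
          Ω.rho s (h₁ * h₂) = Ω.rho s h₁ * Ω.rho (Ω.act s h₁) h₂) ∧
       (∀ (s₁ s₂ : S) (h : H),
          Ω.act (Ω.mul s₁ s₂) h
            = Ω.mul (Ω.act s₁ (Ω.rho s₂ h)) (Ω.act s₂ h)))) ∧
    (∀ x y : H × S,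
      Ω.Mul x y = (x.1 * Ω.rho x.2 y.1, Ω.mul (Ω.act x.2 y.1) y.2)) := by
  rw [IsGroupExtendingStructure, Ω.mul_eq_bicrossedMul hf]
  open ExtendingDatum in
  refine ⟨⟨fun ⟨hmul_assoc, _, _, hinv⟩ => ?_,
    fun ⟨hS, hSinv, hrho, hact, hrho_mul, hact_mul⟩ => ?_⟩, fun _ _ => rfl⟩
  · have hassoc : Std.Associative Ω.bicrossedMul := ⟨hmul_assoc⟩
    exact ⟨mul_assoc_of_bicrossedMul_assoc hassoc,
      fun s => exists_mul_eq_one_of_bicrossedMul_eq_one (hinv (1, s)).choose_spec,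
      rho_mul_of_bicrossedMul_assoc hassoc, act_mul_of_bicrossedMul_assoc hassoc,
      rho_mul_right_of_bicrossedMul_assoc hassoc, act_mul_left_of_bicrossedMul_assoc hassoc⟩
  · exact ⟨(bicrossedMul_assoc hS hrho hact hrho_mul hact_mul).assoc, Ω.one_bicrossedMul,
      Ω.bicrossedMul_one, exists_bicrossedMul_eq_one hSinv hact⟩
end

section
/- Let H be a group and Ω(H) = ((S, 1_S, ∗), ◁, ▷, f) an extending datum of H in which ▷ is the trivial action, i.e., s ▷ h = h for all s ∈ S, h ∈ H. Then Ω(H) is a group extending structure of H if and only if ◁ is a right action of the group H on the set S, every s ∈ S admits s' ∈ S with s' ∗ s = 1_S, and the following hold for all s₁, s₂, s₃ ∈ S and h ∈ H: (s₁ ∗ s₂) ∗ s₃ = (s₁ ◁ f(s₂, s₃)) ∗ (s₂ ∗ s₃); f(s₁ ◁ h, s₂ ◁ h) = h⁻¹ f(s₁, s₂) h; (s₁ ∗ s₂) ◁ h = (s₁ ◁ h) ∗ (s₂ ◁ h); f(s₁, s₂) f(s₁ ∗ s₂, s₃) = f(s₂, s₃) f(s₁ ◁ f(s₂, s₃), s₂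 ∗ s₃). In this case the multiplication of the unified product takes the form (h₁, s₁) · (h₂, s₂) = (h₁ h₂ f(s₁ ◁ h₂, s₂), (s₁ ◁ h₂) ∗ s₂) (the twisted product H ×^{f,◁} S). -/
/-!
Associativity of the unified product, evaluated on the triples `(1, s), (h₁, 1_S), (h₂, 1_S)`,
`(1, s₁), (1, s₂), (1, s₃)` and `(1, s₁), (1, s₂), (h, 1_S)`, yields the action law and the
four compatibility conditions, and a left inverse of `(1, s)` gives one of `s`. Conversely,
once `▷` is trivial the multiplication is the twisted product, whose associativity unwinds into
exactly these conditions, and `(f(s', s)⁻¹ h⁻¹, s' ◁ h⁻¹)` is a left inverse of `(h, s)`.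
-/

universe u v

variable {H : Type u} [Group H] {S : Type v}

namespace ExtendingDatum

variable (Ω : ExtendingDatum H S)

theorem Mul_one_left (a : H × S) : Ω.Mul ((1 : H), Ω.one) a = a := by
  simp only [ExtendingDatum.Mul, Ω.one_rho', Ω.one_act', Ω.one_mul', Ω.f_one_left', one_mul,
    mul_one]

theorem Mul_one_right (a : H × S) : Ω.Mul a ((1 : H), Ω.one) = a := by
  simp only [ExtendingDatum.Mul, Ω.rho_one', Ω.act_one', Ω.mul_one', Ω.f_one_right', mul_one]

theorem Mul_eq_twisted_of_rho_trivial (hrho : ∀ (s : S) (h : H), Ω.rho s h = h)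
    (x y : H × S) :
    Ω.Mul x y = (x.1 * y.1 * Ω.f (Ω.act x.2 y.1) y.2, Ω.mul (Ω.act x.2 y.1) y.2) := by
  simp only [ExtendingDatum.Mul, hrho]

section Necessity

variable {Ω} (hassoc : ∀ a b c : H × S, Ω.Mul (Ω.Mul a b) c = Ω.Mul a (Ω.Mul b c))
include hassoc

theorem act_mul_of_Mul_assoc (s : S) (h₁ h₂ : H) :
    Ω.act s (h₁ * h₂) = Ω.act (Ω.act s h₁) h₂ := by
  have h := congrArg Prod.snd (hassoc ((1 : H), s) (h₁, Ω.one) (h₂, Ω.one))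
  simp only [ExtendingDatum.Mul, Ω.one_rho', Ω.one_act', Ω.mul_one', Ω.f_one_right',
    mul_one] at h
  exact h.symm

theorem mul_assoc_twisted_of_Mul_assoc (s₁ s₂ s₃ : S) :
    Ω.mul (Ω.mul s₁ s₂) s₃ = Ω.mul (Ω.act s₁ (Ω.f s₂ s₃)) (Ω.mul s₂ s₃) := by
  have h := congrArg Prod.snd (hassoc ((1 : H), s₁) ((1 : H), s₂) ((1 : H), s₃))
  simpa only [ExtendingDatum.Mul, Ω.rho_one', Ω.act_one', one_mul] using h

variable (hrho : ∀ (s : S) (h : H), Ω.rho s h = h)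
include hrho

theorem f_cocycle_of_Mul_assoc (s₁ s₂ s₃ : S) :
    Ω.f s₁ s₂ * Ω.f (Ω.mul s₁ s₂) s₃
      = Ω.f s₂ s₃ * Ω.f (Ω.act s₁ (Ω.f s₂ s₃)) (Ω.mul s₂ s₃) := by
  have h := congrArg Prod.fst (hassoc ((1 : H), s₁) ((1 : H), s₂) ((1 : H), s₃))
  simpa only [ExtendingDatum.Mul, hrho, Ω.act_one', one_mul, mul_one] using h

theorem f_act_act_of_Mul_assoc (s₁ s₂ : S) (h : H) :
    Ω.f (Ω.act s₁ h) (Ω.act s₂ h) = h⁻¹ * Ω.f s₁ s₂ * h := by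
  have e := congrArg Prod.fst (hassoc ((1 : H), s₁) ((1 : H), s₂) (h, Ω.one))
  simp only [ExtendingDatum.Mul, hrho, Ω.act_one', Ω.mul_one', Ω.f_one_right', one_mul,
    mul_one] at e
  rw [mul_assoc, eq_inv_mul_iff_mul_eq, e]

theorem act_mul_distrib_of_Mul_assoc (s₁ s₂ : S) (h : H) :
    Ω.act (Ω.mul s₁ s₂) h = Ω.mul (Ω.act s₁ h) (Ω.act s₂ h) := by
  have e := congrArg Prod.snd (hassoc ((1 : H), s₁) ((1 : H), s₂) (h, Ω.one))
  simpa only [ExtendingDatum.Mul, hrho, Ω.act_one', Ω.mul_one', Ω.f_one_right', one_mul,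
    mul_one] using e

end Necessity

theorem exists_mul_eq_one_of_exists_Mul_eq_one
    (hinv : ∀ a : H × S, ∃ b : H × S, Ω.Mul b a = ((1 : H), Ω.one)) (s : S) :
    ∃ s' : S, Ω.mul s' s = Ω.one := by
  obtain ⟨⟨_, t⟩, ht⟩ := hinv ((1 : H), s)
  exact ⟨t, by simpa only [ExtendingDatum.Mul, Ω.act_one'] using congrArg Prod.snd ht⟩

section Sufficiency

variable {Ω} (hrho : ∀ (s : S) (h : H), Ω.rho s h = h)
  (hact : ∀ (s : S) (h₁ h₂ : H), Ω.act s (h₁ * h₂) = Ω.act (Ω.act s h₁) h₂)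
include hrho hact

theorem exists_Mul_eq_one_of_rho_trivial (hinv : ∀ s : S, ∃ s' : S, Ω.mul s' s = Ω.one)
    (a : H × S) : ∃ b : H × S, Ω.Mul b a = ((1 : H), Ω.one) := by
  obtain ⟨h, s⟩ := a
  obtain ⟨s', hs'⟩ := hinv s
  have hcancel : Ω.act (Ω.act s' h⁻¹) h = s' := by rw [← hact, inv_mul_cancel, Ω.act_one']
  refine ⟨((Ω.f s' s)⁻¹ * h⁻¹, Ω.act s' h⁻¹), ?_⟩
  rw [Mul_eq_twisted_of_rho_trivial Ω hrho]
  simp only [hcancel, hs', inv_mul_cancel_right, inv_mul_cancel]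

theorem Mul_assoc_of_rho_trivial
    (hmul : ∀ s₁ s₂ s₃ : S,
      Ω.mul (Ω.mul s₁ s₂) s₃ = Ω.mul (Ω.act s₁ (Ω.f s₂ s₃)) (Ω.mul s₂ s₃))
    (hf_act : ∀ (s₁ s₂ : S) (h : H), Ω.f (Ω.act s₁ h) (Ω.act s₂ h) = h⁻¹ * Ω.f s₁ s₂ * h)
    (hdistrib : ∀ (s₁ s₂ : S) (h : H),
      Ω.act (Ω.mul s₁ s₂) h = Ω.mul (Ω.act s₁ h) (Ω.act s₂ h))
    (hcocycle : ∀ s₁ s₂ s₃ : S,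
      Ω.f s₁ s₂ * Ω.f (Ω.mul s₁ s₂) s₃ = Ω.f s₂ s₃ * Ω.f (Ω.act s₁ (Ω.f s₂ s₃)) (Ω.mul s₂ s₃))
    (a b c : H × S) : Ω.Mul (Ω.Mul a b) c = Ω.Mul a (Ω.Mul b c) := by
  obtain ⟨h₁, s₁⟩ := a
  obtain ⟨h₂, s₂⟩ := b
  obtain ⟨h₃, s₃⟩ := c
  simp only [Mul_eq_twisted_of_rho_trivial Ω hrho, hdistrib, hmul, hact, Prod.mk.injEq,
    and_true]
  set X := Ω.act (Ω.act s₁ h₂) h₃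
  set B := Ω.act s₂ h₃
  -- `f(s₁ ◁ h₂, s₂)` moves past `h₃` by the conjugation rule; then the cocycle identity applies.
  have hconj : Ω.f (Ω.act s₁ h₂) s₂ * h₃ = h₃ * Ω.f X B := by
    rw [hf_act]; group
  calc h₁ * h₂ * Ω.f (Ω.act s₁ h₂) s₂ * h₃ * Ω.f (Ω.mul X B) s₃
      = h₁ * h₂ * (Ω.f (Ω.act s₁ h₂) s₂ * h₃) * Ω.f (Ω.mul X B) s₃ := by group
    _ = h₁ * h₂ * h₃ * (Ω.f X B * Ω.f (Ω.mul X B) s₃) := by rw [hconj]; group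
    _ = h₁ * (h₂ * h₃ * Ω.f B s₃) * Ω.f (Ω.act X (Ω.f B s₃)) (Ω.mul B s₃) := by
      rw [hcocycle]; group

end Sufficiency

end ExtendingDatum

/-- Let `Ω(H)` be an extending datum of `H` in which `▷` is the trivial action.
Then `Ω(H)` is a group extending structure of `H` if and only if `◁` is a right
action of the group `H` on the set `S`, every `s ∈ S` admits `s' ∈ S` with
`s' ∗ s = 1_S`, and the four listed compatibility conditions hold. In this case the
multiplication of the unified product takes the form
`(h₁, s₁) · (h₂, s₂) = (h₁ h₂ f(s₁ ◁ h₂, s₂), (s₁ ◁ h₂) ∗ s₂)`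
(the twisted product `H ×^{f,◁} S`). -/
theorem trivial_rho_iff_twisted_product (Ω : ExtendingDatum H S)
    (hrho : ∀ (s : S) (h : H), Ω.rho s h = h) :
    (IsGroupExtendingStructure Ω ↔
      ((∀ (s : S) (h₁ h₂ : H), Ω.act s (h₁ * h₂) = Ω.act (Ω.act s h₁) h₂) ∧
       (∀ s : S, ∃ s' : S, Ω.mul s' s = Ω.one) ∧
       (∀ s₁ s₂ s₃ : S,
          Ω.mul (Ω.mul s₁ s₂) s₃ = Ω.mul (Ω.act s₁ (Ω.f s₂ s₃)) (Ω.mul s₂ s₃)) ∧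
       (∀ (s₁ s₂ : S) (h : H),
          Ω.f (Ω.act s₁ h) (Ω.act s₂ h) = h⁻¹ * Ω.f s₁ s₂ * h) ∧
       (∀ (s₁ s₂ : S) (h : H),
          Ω.act (Ω.mul s₁ s₂) h = Ω.mul (Ω.act s₁ h) (Ω.act s₂ h)) ∧
       (∀ s₁ s₂ s₃ : S,
          Ω.f s₁ s₂ * Ω.f (Ω.mul s₁ s₂) s₃
            = Ω.f s₂ s₃ * Ω.f (Ω.act s₁ (Ω.f s₂ s₃)) (Ω.mul s₂ s₃)))) ∧
    (∀ x y : H × S,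
      Ω.Mul x y = (x.1 * y.1 * Ω.f (Ω.act x.2 y.1) y.2, Ω.mul (Ω.act x.2 y.1) y.2)) := by
  open ExtendingDatum in
  refine ⟨⟨fun ⟨hassoc, _, _, hinv⟩ => ?_, fun ⟨hact, hinv, hmul, hf_act, hdistrib, hcocycle⟩ =>
    ?_⟩, Mul_eq_twisted_of_rho_trivial Ω hrho⟩
  · exact ⟨act_mul_of_Mul_assoc hassoc, exists_mul_eq_one_of_exists_Mul_eq_one Ω hinv,
      mul_assoc_twisted_of_Mul_assoc hassoc, f_act_act_of_Mul_assoc hassoc hrho,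
      act_mul_distrib_of_Mul_assoc hassoc hrho, f_cocycle_of_Mul_assoc hassoc hrho⟩
  · exact ⟨Mul_assoc_of_rho_trivial hrho hact hmul hf_act hdistrib hcocycle, Mul_one_left Ω,
      Mul_one_right Ω, exists_Mul_eq_one_of_rho_trivial hrho hact hinv⟩
end

section
/- Let H be a group, Ω(H) = ((S, 1_S, ∗), ◁, ▷, f) a group extending structure of H, and H ⋉ S the unified product. Let G be a group, u : H → G a morphism of groups and v : S → G a map such that v(s₁) v(s₂) = u(f(s₁, s₂)) v(s₁ ∗ s₂) and v(s) u(h) = u(s ▷ h) v(s ◁ h) for all s, s₁, s₂ ∈ S, h ∈ H. Then there exists a unique morphism of groups φ : H ⋉ S → G such that φ(h, 1_S) = u(h) and φ(1_H, s) = v(s) for all h ∈ H, s ∈ S; explicitly φ(h, s) = u(h) v(s). -/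
universe u v

variable {H : Type u} [Group H] {S : Type v}

/-! The map `(h, s) ↦ u h * v s` is multiplicative after one rewrite with each compatibility
condition, and it is the only candidate because `(h, s) = (h, 1_S) · (1_H, s)`. -/

namespace ExtendingDatum

variable (Ω : ExtendingDatum H S) {G : Type*} [Group G] (u : H →* G) {v : S → G}

theorem Mul_mk_one_one_mk (h : H) (s : S) : Ω.Mul (h, Ω.one) (1, s) = (h, s) := by
  simp only [ExtendingDatum.Mul, Ω.rho_one', Ω.act_one', Ω.f_one_left', Ω.one_mul', mul_one]

theorem map_one_of_compat
    (huv1 : ∀ s₁ s₂ : S, v s₁ * v s₂ = u (Ω.f s₁ s₂) * v (Ω.mul s₁ s₂)) : v Ω.one = 1 := by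
  have h := huv1 Ω.one Ω.one
  rwa [Ω.f_one_right', Ω.mul_one', map_one, one_mul, mul_eq_right] at h

theorem map_Mul_of_compat
    (huv1 : ∀ s₁ s₂ : S, v s₁ * v s₂ = u (Ω.f s₁ s₂) * v (Ω.mul s₁ s₂))
    (huv2 : ∀ (s : S) (h : H), v s * u h = u (Ω.rho s h) * v (Ω.act s h)) (a b : H × S) :
    u (Ω.Mul a b).1 * v (Ω.Mul a b).2 = (u a.1 * v a.2) * (u b.1 * v b.2) := by
  obtain ⟨h₁, s₁⟩ := a
  obtain ⟨h₂, s₂⟩ := b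
  calc u (Ω.Mul (h₁, s₁) (h₂, s₂)).1 * v (Ω.Mul (h₁, s₁) (h₂, s₂)).2
      = u h₁ * u (Ω.rho s₁ h₂) * (u (Ω.f (Ω.act s₁ h₂) s₂) * v (Ω.mul (Ω.act s₁ h₂) s₂)) := by
        simp only [ExtendingDatum.Mul, map_mul, mul_assoc]
    _ = u h₁ * (u (Ω.rho s₁ h₂) * v (Ω.act s₁ h₂)) * v s₂ := by
        rw [← huv1]; group
    _ = (u h₁ * v s₁) * (u h₂ * v s₂) := by
        rw [← huv2]; group

theorem eq_of_map_Mul {φ : H × S → G} (hmul : ∀ a b : H × S, φ (Ω.Mul a b) = φ a * φ b)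
    (hu : ∀ h : H, φ (h, Ω.one) = u h) (hv : ∀ s : S, φ ((1 : H), s) = v s) (x : H × S) :
    φ x = u x.1 * v x.2 := by
  rw [← hu, ← hv, ← hmul, Mul_mk_one_one_mk]

end ExtendingDatum

theorem unified_product_initial_general (Ω : ExtendingDatum H S)
    {G : Type*} [Group G] (u : H →* G) (v : S → G)
    (huv1 : ∀ s₁ s₂ : S, v s₁ * v s₂ = u (Ω.f s₁ s₂) * v (Ω.mul s₁ s₂))
    (huv2 : ∀ (s : S) (h : H), v s * u h = u (Ω.rho s h) * v (Ω.act s h)) :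
    (∀ a b : H × S,
      u (Ω.Mul a b).1 * v (Ω.Mul a b).2 = (u a.1 * v a.2) * (u b.1 * v b.2)) ∧
    (∀ h : H, u h * v Ω.one = u h) ∧
    (∀ s : S, u 1 * v s = v s) ∧
    (∀ φ : H × S → G,
      (∀ a b : H × S, φ (Ω.Mul a b) = φ a * φ b) →
      (∀ h : H, φ (h, Ω.one) = u h) →
      (∀ s : S, φ ((1 : H), s) = v s) →
      ∀ x : H × S, φ x = u x.1 * v x.2) :=
  ⟨Ω.map_Mul_of_compat u huv1 huv2,
    fun h => by rw [Ω.map_one_of_compat u huv1, mul_one],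
    fun s => by rw [map_one, one_mul],
    fun _ hmul hu hv => Ω.eq_of_map_Mul u hmul hu hv⟩

/-- **Universal property (initial object).** Let `Ω(H)` be a group extending
structure of `H` with unified product `H ⋉ S`, `G` a group, `u : H → G` a morphism
of groups and `v : S → G` a map satisfying
`v(s₁) v(s₂) = u(f(s₁, s₂)) v(s₁ ∗ s₂)` and `v(s) u(h) = u(s ▷ h) v(s ◁ h)`.
Then there exists a unique morphism of groups `φ : H ⋉ S → G` with
`φ (h, 1_S) = u h` and `φ (1_H, s) = v s`, namely `φ (h, s) = u h * v s`. -/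
theorem unified_product_initial (Ω : ExtendingDatum H S)
    (hΩ : IsGroupExtendingStructure Ω)
    {G : Type*} [Group G] (u : H →* G) (v : S → G)
    (huv1 : ∀ s₁ s₂ : S, v s₁ * v s₂ = u (Ω.f s₁ s₂) * v (Ω.mul s₁ s₂))
    (huv2 : ∀ (s : S) (h : H), v s * u h = u (Ω.rho s h) * v (Ω.act s h)) :
    (∀ a b : H × S,
      u (Ω.Mul a b).1 * v (Ω.Mul a b).2 = (u a.1 * v a.2) * (u b.1 * v b.2)) ∧
    (∀ h : H, u h * v Ω.one = u h) ∧
    (∀ s : S, u 1 * v s = v s) ∧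
    (∀ φ : H × S → G,
      (∀ a b : H × S, φ (Ω.Mul a b) = φ a * φ b) →
      (∀ h : H, φ (h, Ω.one) = u h) →
      (∀ s : S, φ ((1 : H), s) = v s) →
      ∀ x : H × S, φ x = u x.1 * v x.2) :=
  unified_product_initial_general Ω u v huv1 huv2
end

section
/- Let H be a group and let Ω(H) = ((S, 1_S, ∗), ◁, ▷, f) and Ω'(H) = ((S', 1_{S'}, ∗'), ◁', ▷', f') be two group extending structures of H, with unified products H ⋉ S and H ⋉' S'. Then a map ψ : H ⋉ S → H ⋉' S' is a morphism of groups satisfying ψ(h, 1_S) = (h, 1_{S'}) for all h ∈ H if and only if ψ(h, s) = (h r(s), v(s)) for unitary maps r : S → H (r(1_S) = 1_H) and v : S → S' (v(1_S) = 1_{S'}) satisfying, for all s, s₁, s₂ ∈ S and h ∈ H: v(s ◁ h) = v(s) ◁' h; (s ▷ h) r(s ◁ h) = r(s) (v(s) ▷' h); v(s₁ ∗ s₂) = (v(s₁) ◁' r(s₂)) ∗' v(s₂); f(s₁, s₂) r(s₁ ∗ s₂) = r(s₁) (v(s₁) ▷' r(s₂)) f'(v(s₁) ◁' r(s₂), v(s₂)).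 Moreover, the pair (r, v) is uniquely determined by ψ. -/
universe u v

variable {H : Type u} [Group H] {S : Type v}

universe w

/-!
Since `(h, s) = (h, 1_S) · (1_H, s)` in `H ⋉ S`, a morphism fixing `H` is determined by its
values on the elements `(1_H, s)`, which yields `r` and `v`; conditions (p1)–(p4) are what
multiplicativity says on the products `(1_H, s) · (h, 1_S)` and `(1_H, s₁) · (1_H, s₂)`.
Conversely, associativity in `H ⋉' S'` makes `◁'` a right action and `▷'` a cocycle for it,
and with these (p1)–(p4) give multiplicativity on arbitrary pairs.
-/

namespace ExtendingDatum

variable {S' : Type w} (Ω : ExtendingDatum H S)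

lemma Mul_mk_one_left (h k : H) (s : S) : Ω.Mul (h, Ω.one) (k, s) = (h * k, s) := by
  simp [ExtendingDatum.Mul, Ω.one_act', Ω.one_rho', Ω.f_one_left', Ω.one_mul']

lemma Mul_mk_one_right (k h : H) (s : S) :
    Ω.Mul (k, s) (h, Ω.one) = (k * Ω.rho s h, Ω.act s h) := by
  simp [ExtendingDatum.Mul, Ω.f_one_right', Ω.mul_one']

lemma Mul_one_mk_right (k : H) (s₁ s₂ : S) :
    Ω.Mul (k, s₁) (1, s₂) = (k * Ω.f s₁ s₂, Ω.mul s₁ s₂) := by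
  simp [ExtendingDatum.Mul, Ω.rho_one', Ω.act_one']

lemma rho_mul_act_of_assoc
    (assoc : ∀ a b c : H × S, Ω.Mul (Ω.Mul a b) c = Ω.Mul a (Ω.Mul b c)) (s : S) (a b : H) :
    (Ω.rho s a * Ω.rho (Ω.act s a) b, Ω.act (Ω.act s a) b) =
      (Ω.rho s (a * b), Ω.act s (a * b)) := by
  simpa [Mul_mk_one_right, Ω.one_act', Ω.one_rho'] using assoc (1, s) (a, Ω.one) (b, Ω.one)

variable {Ω} {Ω' : ExtendingDatum H S'} {ψ : H × S → H × S'} {r : S → H} {v : S → S'}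

lemma map_mk_of_map_mul (hmul : ∀ a b : H × S, ψ (Ω.Mul a b) = Ω'.Mul (ψ a) (ψ b))
    (hone : ∀ h : H, ψ (h, Ω.one) = (h, Ω'.one)) (h : H) (s : S) :
    ψ (h, s) = (h * (ψ (1, s)).1, (ψ (1, s)).2) :=
  calc ψ (h, s) = ψ (Ω.Mul (h, Ω.one) (1, s)) := by rw [Mul_mk_one_left, mul_one]
    _ = Ω'.Mul (h, Ω'.one) (ψ (1, s)) := by rw [hmul, hone]
    _ = (h * (ψ (1, s)).1, (ψ (1, s)).2) := Mul_mk_one_left ..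

lemma act_compat_of_map_mul (hmul : ∀ a b : H × S, ψ (Ω.Mul a b) = Ω'.Mul (ψ a) (ψ b))
    (hone : ∀ h : H, ψ (h, Ω.one) = (h, Ω'.one))
    (hψ : ∀ (h : H) (s : S), ψ (h, s) = (h * r s, v s)) (s : S) (h : H) :
    (Ω.rho s h * r (Ω.act s h), v (Ω.act s h)) = (r s * Ω'.rho (v s) h, Ω'.act (v s) h) :=
  calc _ = ψ (Ω.Mul (1, s) (h, Ω.one)) := by rw [Mul_mk_one_right, one_mul, hψ]
    _ = Ω'.Mul (ψ (1, s)) (ψ (h, Ω.one)) := hmul ..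
    _ = _ := by rw [hψ, hone, one_mul, Mul_mk_one_right]

lemma mul_compat_of_map_mul (hmul : ∀ a b : H × S, ψ (Ω.Mul a b) = Ω'.Mul (ψ a) (ψ b))
    (hψ : ∀ (h : H) (s : S), ψ (h, s) = (h * r s, v s)) (s₁ s₂ : S) :
    (Ω.f s₁ s₂ * r (Ω.mul s₁ s₂), v (Ω.mul s₁ s₂)) =
      (r s₁ * Ω'.rho (v s₁) (r s₂) * Ω'.f (Ω'.act (v s₁) (r s₂)) (v s₂),
        Ω'.mul (Ω'.act (v s₁) (r s₂)) (v s₂)) :=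
  calc _ = ψ (Ω.Mul (1, s₁) (1, s₂)) := by rw [Mul_one_mk_right, one_mul, hψ]
    _ = Ω'.Mul (ψ (1, s₁)) (ψ (1, s₂)) := hmul ..
    _ = _ := by rw [hψ, hψ, one_mul, one_mul]; rfl

lemma map_mul_of_compat
    (assoc' : ∀ a b c : H × S', Ω'.Mul (Ω'.Mul a b) c = Ω'.Mul a (Ω'.Mul b c))
    (p1 : ∀ (s : S) (h : H), v (Ω.act s h) = Ω'.act (v s) h)
    (p2 : ∀ (s : S) (h : H), Ω.rho s h * r (Ω.act s h) = r s * Ω'.rho (v s) h)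
    (p3 : ∀ s₁ s₂ : S, v (Ω.mul s₁ s₂) = Ω'.mul (Ω'.act (v s₁) (r s₂)) (v s₂))
    (p4 : ∀ s₁ s₂ : S, Ω.f s₁ s₂ * r (Ω.mul s₁ s₂)
      = r s₁ * Ω'.rho (v s₁) (r s₂) * Ω'.f (Ω'.act (v s₁) (r s₂)) (v s₂))
    (hψ : ∀ (h : H) (s : S), ψ (h, s) = (h * r s, v s)) (a b : H × S) :
    ψ (Ω.Mul a b) = Ω'.Mul (ψ a) (ψ b) := by
  obtain ⟨h₁, s₁⟩ := a
  obtain ⟨h₂, s₂⟩ := b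
  obtain ⟨hrho, hact⟩ := Prod.mk_inj.1 (rho_mul_act_of_assoc Ω' assoc' (v s₁) h₂ (r s₂))
  simp only [ExtendingDatum.Mul, hψ, Prod.mk.injEq]
  refine ⟨?_, by rw [p3, p1, hact]⟩
  rw [← hrho, ← hact, mul_assoc _ _ (r _), p4, p1]
  simp only [mul_assoc]
  rw [← mul_assoc (Ω.rho s₁ h₂), p2, mul_assoc]

end ExtendingDatum

theorem morphisms_of_unified_products_general {S' : Type w}
    (Ω : ExtendingDatum H S) (Ω' : ExtendingDatum H S')
    (hΩ' : IsGroupExtendingStructure Ω')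
    (ψ : H × S → H × S') :
    (((∀ a b : H × S, ψ (Ω.Mul a b) = Ω'.Mul (ψ a) (ψ b)) ∧
        (∀ h : H, ψ (h, Ω.one) = (h, Ω'.one))) ↔
      ∃ (r : S → H) (v : S → S'),
        r Ω.one = 1 ∧ v Ω.one = Ω'.one ∧
        (∀ (s : S) (h : H), v (Ω.act s h) = Ω'.act (v s) h) ∧
        (∀ (s : S) (h : H),
          Ω.rho s h * r (Ω.act s h) = r s * Ω'.rho (v s) h) ∧
        (∀ s₁ s₂ : S,
          v (Ω.mul s₁ s₂) = Ω'.mul (Ω'.act (v s₁) (r s₂)) (v s₂)) ∧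
        (∀ s₁ s₂ : S,
          Ω.f s₁ s₂ * r (Ω.mul s₁ s₂)
            = r s₁ * Ω'.rho (v s₁) (r s₂) * Ω'.f (Ω'.act (v s₁) (r s₂)) (v s₂)) ∧
        (∀ (h : H) (s : S), ψ (h, s) = (h * r s, v s))) ∧
    (∀ (r₁ r₂ : S → H) (v₁ v₂ : S → S'),
      (∀ (h : H) (s : S), ψ (h, s) = (h * r₁ s, v₁ s)) →
      (∀ (h : H) (s : S), ψ (h, s) = (h * r₂ s, v₂ s)) →
      r₁ = r₂ ∧ v₁ = v₂) := by
  refine ⟨⟨fun ⟨hmul, hone⟩ => ?_, fun ⟨r, v, hr, hv, p1, p2, p3, p4, hψ⟩ => ?_⟩, ?_⟩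
  · have hψ := ExtendingDatum.map_mk_of_map_mul hmul hone
    have act := fun s h =>
      Prod.mk_inj.1 (ExtendingDatum.act_compat_of_map_mul hmul hone hψ s h)
    have mul := fun s₁ s₂ =>
      Prod.mk_inj.1 (ExtendingDatum.mul_compat_of_map_mul hmul hψ s₁ s₂)
    refine ⟨fun s => (ψ (1, s)).1, fun s => (ψ (1, s)).2, by simp [hone], by simp [hone],
      fun s h => (act s h).2, fun s h => (act s h).1, fun s₁ s₂ => (mul s₁ s₂).2,
      fun s₁ s₂ => (mul s₁ s₂).1, hψ⟩
  · exact ⟨ExtendingDatum.map_mul_of_compat hΩ'.1 p1 p2 p3 p4 hψ,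
      fun h => by rw [hψ, hr, hv, mul_one]⟩
  · intro r₁ r₂ v₁ v₂ h₁ h₂
    have h := fun s => Prod.mk_inj.1 ((h₁ 1 s).symm.trans (h₂ 1 s))
    simp only [one_mul] at h
    exact ⟨funext fun s => (h s).1, funext fun s => (h s).2⟩

/-- **(Theorem 3.1, classification of morphisms).** Let `Ω(H)` and `Ω'(H)` be two group
extending structures of `H` on pointed sets `(S, 1_S)` and `(S', 1_{S'})`. A map
`ψ : H ⋉ S → H ⋉' S'` is a morphism of groups with `ψ (h, 1_S) = (h, 1_{S'})` for all
`h ∈ H` if and only if `ψ (h, s) = (h r(s), v(s))` for unitary maps `r : S → H`,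
`v : S → S'` satisfying the compatibility conditions (p1)–(p4). Moreover, the pair
`(r, v)` is uniquely determined by `ψ`. -/
theorem morphisms_of_unified_products {S' : Type w}
    (Ω : ExtendingDatum H S) (Ω' : ExtendingDatum H S')
    (hΩ : IsGroupExtendingStructure Ω) (hΩ' : IsGroupExtendingStructure Ω')
    (ψ : H × S → H × S') :
    (((∀ a b : H × S, ψ (Ω.Mul a b) = Ω'.Mul (ψ a) (ψ b)) ∧
        (∀ h : H, ψ (h, Ω.one) = (h, Ω'.one))) ↔
      ∃ (r : S → H) (v : S → S'),
        r Ω.one = 1 ∧ v Ω.one = Ω'.one ∧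
        (∀ (s : S) (h : H), v (Ω.act s h) = Ω'.act (v s) h) ∧
        (∀ (s : S) (h : H),
          Ω.rho s h * r (Ω.act s h) = r s * Ω'.rho (v s) h) ∧
        (∀ s₁ s₂ : S,
          v (Ω.mul s₁ s₂) = Ω'.mul (Ω'.act (v s₁) (r s₂)) (v s₂)) ∧
        (∀ s₁ s₂ : S,
          Ω.f s₁ s₂ * r (Ω.mul s₁ s₂)
            = r s₁ * Ω'.rho (v s₁) (r s₂) * Ω'.f (Ω'.act (v s₁) (r s₂)) (v s₂)) ∧
        (∀ (h : H) (s : S), ψ (h, s) = (h * r s, v s))) ∧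
    (∀ (r₁ r₂ : S → H) (v₁ v₂ : S → S'),
      (∀ (h : H) (s : S), ψ (h, s) = (h * r₁ s, v₁ s)) →
      (∀ (h : H) (s : S), ψ (h, s) = (h * r₂ s, v₂ s)) →
      r₁ = r₂ ∧ v₁ = v₂) :=
  morphisms_of_unified_products_general Ω Ω' hΩ' ψ
end

section
/- Let H be a group, Ω(H) and Ω'(H) two group extending structures of H on pointed sets (S, 1_S) and (S', 1_{S'}), and let ψ : H ⋉ S → H ⋉' S' be a morphism of groups with ψ(h, 1_S) = (h, 1_{S'}) for all h ∈ H, written ψ(h, s) = (h r(s), v(s)) with unitary maps r : S → H, v : S → S'. Then ψ is an isomorphism of groups if and only if the map v : S → S' is bijective. -/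
universe u v

variable {H : Type u} [Group H] {S : Type v}

universe w

/-! `ψ` factors as the shear `(h, s) ↦ (h * r s, s)`, a bijection of `H × S` because right
translation by `r s` is one on each fibre, followed by `id × v`; and since `H` is nonempty,
`id × v` is bijective exactly when `v` is. -/

open Function

theorem Prod.map_id_bijective_iff {α β γ : Type*} [Nonempty α] {g : β → γ} :
    Bijective (Prod.map (id : α → α) g) ↔ Bijective g := by
  refine ⟨fun h => ⟨fun b₁ b₂ hb => ?_, fun c => ?_⟩, bijective_id.prodMap⟩
  · inhabit α
    injection @h.1 (default, b₁) (default, b₂) (by simp [hb])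
  · inhabit α
    obtain ⟨⟨a, b⟩, hab⟩ := h.2 (default, c)
    exact ⟨b, congr_arg Prod.snd hab⟩

theorem bijective_mul_right_prod_iff {G α β : Type*} [Group G] (r : α → G) (v : α → β) :
    Bijective (fun p : G × α => (p.1 * r p.2, v p.2)) ↔ Bijective v := by
  have hfactor : (fun p : G × α => (p.1 * r p.2, v p.2)) =
      Prod.map id v ∘ Equiv.prodCongrLeft fun a => Equiv.mulRight (r a) := rfl
  rw [hfactor, Equiv.bijective_comp, Prod.map_id_bijective_iff]

theorem unified_product_morphism_bijective_iff_general {S' : Type w}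
    (r : S → H) (v : S → S')
    (ψ : H × S → H × S')
    (hψ : ∀ (h : H) (s : S), ψ (h, s) = (h * r s, v s)) :
    Function.Bijective ψ ↔ Function.Bijective v := by
  obtain rfl : ψ = fun p => (p.1 * r p.2, v p.2) := funext fun p => hψ p.1 p.2
  exact bijective_mul_right_prod_iff r v

/-- Let `Ω(H)` and `Ω'(H)` be two group extending structures of `H` on pointed sets
`(S, 1_S)` and `(S', 1_{S'})`, and let `ψ : H ⋉ S → H ⋉' S'` be a morphism of groups
with `ψ (h, 1_S) = (h, 1_{S'})` for all `h`, written `ψ (h, s) = (h r(s), v(s))` with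
unitary maps `r : S → H`, `v : S → S'`. Then `ψ` is an isomorphism of groups if and
only if `v : S → S'` is bijective. -/
theorem unified_product_morphism_bijective_iff {S' : Type w}
    (Ω : ExtendingDatum H S) (Ω' : ExtendingDatum H S')
    (hΩ : IsGroupExtendingStructure Ω) (hΩ' : IsGroupExtendingStructure Ω')
    (r : S → H) (v : S → S') (hr : r Ω.one = 1) (hv : v Ω.one = Ω'.one)
    (ψ : H × S → H × S')
    (hψ : ∀ (h : H) (s : S), ψ (h, s) = (h * r s, v s))
    (hmul : ∀ a b : H × S, ψ (Ω.Mul a b) = Ω'.Mul (ψ a) (ψ b)) :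
    Function.Bijective ψ ↔ Function.Bijective v :=
  unified_product_morphism_bijective_iff_general r v ψ hψ
end

section
/- Let E be a group and H, S, T subgroups of E such that E has the two exact factorizations E = H S with H ∩ S = {1} and E = H T with H ∩ T = {1}. Let (H, S, ◁, ▷) and (H, T, ◁', ▷') be the associated matched pairs, defined by the unique decompositions s h = (s ▷ h)(s ◁ h) with s ▷ h ∈ H, s ◁ h ∈ S, and t h = (t ▷' h)(t ◁' h) with t ▷' h ∈ H, t ◁' h ∈ T. Then there exists a pair (r, v) of maps r : S → H, v : S → T with r(1) = 1, v(1) = 1 and v bijective, satisfying for all s, s₁, s₂ ∈ S and h ∈ H: r(s) v(s) = s; v(s ◁ h) = v(s) ◁' h; (s ▷ h) r(s ◁ h) = r(s) (v(s) ▷' h); v(s₁ s₂) = (v(s₁) ◁' r(s₂)) v(s₂); r(s₁ s₂) = r(s₁) (v(s₁) ▷' r(s₂)). -/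
/-! Let `r(s)` and `v(s)` be the components of `s ∈ S` in the unique decomposition `E = H T`.
Each identity compares the components of `s h` or of `s₁ s₂ = s₁ r(s₂) v(s₂)`, computed in two
ways. Since `v(s) ∈ H s`, the map `v` is the composite of the bijections `S ≃ H \ E ≃ T` given
by the two factorizations, hence bijective. -/

namespace Subgroup

variable {E : Type*} [Group E] {H S T : Subgroup E}

theorem isComplement'_of_forall_exists_mul (hfac : ∀ x : E, ∃ h ∈ H, ∃ t ∈ T, x = h * t)
    (hHT : H ⊓ T = ⊥) : IsComplement' H T := by
  refine isComplement'_of_disjoint_and_mul_eq_univ (disjoint_iff.mpr hHT)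
    (Set.eq_univ_of_forall fun x => ?_)
  obtain ⟨h, hh, t, ht, rfl⟩ := hfac x
  exact Set.mul_mem_mul hh ht

namespace IsComplement'

theorem equiv_mul (hT : IsComplement' H T) (h : H) (t : T) :
    hT.equiv (h * t) = (h, t) :=
  hT.equiv.apply_symm_apply (h, t)

theorem equiv_mul_mem_left (hT : IsComplement' H T) {rho' : T → H → H} {act' : T → H → T}
    (hmp' : ∀ (t : T) (h : H), (t : E) * (h : E) = (rho' t h : E) * (act' t h : E))
    (g : E) (h : H) :
    hT.equiv (g * h) =
      ((hT.equiv g).1 * rho' (hT.equiv g).2 h, act' (hT.equiv g).2 h) := by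
  conv_lhs => rw [← hT.equiv_fst_mul_equiv_snd g, mul_assoc, hmp']
  rw [hT.equiv_mul_left, equiv_mul]

theorem bijective_equiv_snd (hT : IsComplement' H T) (hS : IsComplement' H S) :
    Function.Bijective fun s : S => (hT.equiv s).2 := by
  have hcoset : (T : Set E).domRestrict Quotient.mk'' ∘ (fun s : S => (hT.equiv s).2) =
      (S : Set E).domRestrict (Quotient.mk'' : E → Quotient (QuotientGroup.rightRel H)) :=
    funext fun s => Quotient.sound' <| QuotientGroup.rightRel_apply.mpr <| by
      rw [mul_inv_eq_of_eq_mul (hT.equiv_fst_mul_equiv_snd s).symm]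
      exact (hT.equiv s).1.2
  rw [← (isComplement_subgroup_left_iff_bijective.mp hT).of_comp_iff', hcoset]
  exact isComplement_subgroup_left_iff_bijective.mp hS

end IsComplement'

end Subgroup

open Subgroup

/-- **(Answer to a question of Kuperberg.)** Let `E` be a group with two exact
factorizations `E = H S` and `E = H T` through subgroups `H, S, T`, and let
`(H, S, ◁, ▷)` and `(H, T, ◁', ▷')` be the associated matched pairs, defined by the
unique decompositions `s h = (s ▷ h)(s ◁ h)` and `t h = (t ▷' h)(t ◁' h)`. Then there
exists a pair of unitary maps `r : S → H`, `v : S → T` with `v` bijective such that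
`r(s) v(s) = s`, `v (s ◁ h) = v(s) ◁' h`, `(s ▷ h) r(s ◁ h) = r(s) (v(s) ▷' h)`,
`v(s₁ s₂) = (v(s₁) ◁' r(s₂)) v(s₂)` and `r(s₁ s₂) = r(s₁) (v(s₁) ▷' r(s₂))`. -/
theorem two_exact_factorizations {E : Type*} [Group E] (H S T : Subgroup E)
    (hfacS : ∀ x : E, ∃ h ∈ H, ∃ s ∈ S, x = h * s) (hHS : H ⊓ S = ⊥)
    (hfacT : ∀ x : E, ∃ h ∈ H, ∃ t ∈ T, x = h * t) (hHT : H ⊓ T = ⊥)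
    (rho : S → H → H) (act : S → H → S)
    (hmp : ∀ (s : S) (h : H), (s : E) * (h : E) = (rho s h : E) * (act s h : E))
    (rho' : T → H → H) (act' : T → H → T)
    (hmp' : ∀ (t : T) (h : H), (t : E) * (h : E) = (rho' t h : E) * (act' t h : E)) :
    ∃ (r : S → H) (v : S → T),
      r 1 = 1 ∧ v 1 = 1 ∧ Function.Bijective v ∧
      (∀ s : S, (r s : E) * (v s : E) = (s : E)) ∧
      (∀ (s : S) (h : H), v (act s h) = act' (v s) h) ∧
      (∀ (s : S) (h : H), rho s h * r (act s h) = r s * rho' (v s) h) ∧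
      (∀ s₁ s₂ : S, v (s₁ * s₂) = act' (v s₁) (r s₂) * v s₂) ∧
      (∀ s₁ s₂ : S, r (s₁ * s₂) = r s₁ * rho' (v s₁) (r s₂)) := by
  have hS := isComplement'_of_forall_exists_mul hfacS hHS
  have hT := isComplement'_of_forall_exists_mul hfacT hHT
  have h_one : hT.equiv 1 = (1, 1) := hT.equiv_one H.one_mem T.one_mem
  have h_mul_H : ∀ (s : S) (h : H),
      (rho s h * (hT.equiv (act s h)).1, (hT.equiv (act s h)).2) =
        ((hT.equiv s).1 * rho' (hT.equiv s).2 h, act' (hT.equiv s).2 h) := fun s h => by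
    rw [← hT.equiv_mul_left, ← hmp, hT.equiv_mul_mem_left hmp']
  have h_mul_S : ∀ s₁ s₂ : S, hT.equiv (s₁ * s₂) =
      ((hT.equiv s₁).1 * rho' (hT.equiv s₁).2 (hT.equiv s₂).1,
        act' (hT.equiv s₁).2 (hT.equiv s₂).1 * (hT.equiv s₂).2) := fun s₁ s₂ => by
    conv_lhs => rw [← hT.equiv_fst_mul_equiv_snd s₂, ← mul_assoc]
    rw [hT.equiv_mul_right, hT.equiv_mul_mem_left hmp']
  exact ⟨fun s => (hT.equiv s).1, fun s => (hT.equiv s).2, congrArg Prod.fst h_one,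
    congrArg Prod.snd h_one, hT.bijective_equiv_snd hS, fun s => hT.equiv_fst_mul_equiv_snd s,
    fun s h => congrArg Prod.snd (h_mul_H s h), fun s h => congrArg Prod.fst (h_mul_H s h),
    fun s₁ s₂ => congrArg Prod.snd (h_mul_S s₁ s₂), fun s₁ s₂ => congrArg Prod.fst (h_mul_S s₁ s₂)⟩
end
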